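/- arXiv:1411.1701 — 5 statements merged into one kernel-verified Lean document; each statement's English description precedes it below -/
import Mathlib

section
/- For every m×n transportation polytope P(u,v) with positive margins and any two vertices O and F of P(u,v), there exists a feasible circuit walk from O to F of length at most m + n − 1. In particular, the feasible circuit diameter of every m×n transportation polytope is at most the Hirsch bound m + n − 1. -/
/-!
From a feasible point `y` towards a vertex `F`, move along a circuit `g` conformal to `F - y`
(one exists: a conformal zero-margin matrix of minimal support is a circuit) by the largest
step `α` with `α • g` between `0` and `F - y` coordinatewise. Then `y + α • g` is feasible and
`F - (y + α • g)` has lost a coordinate of its support, so the cycle space of that support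
strictly shrinks, and each step lowers its dimension.

For two vertices `O`, `F`, the support of `F - O` lies in `supp O ∪ supp F`, and no nonzero
cycle lives on the support of a vertex. Hence restricting to `supp O` and taking margins embeds
the cycle space on `supp O ∪ supp F` into the hyperplane `∑ row margins = ∑ column margins`,
of dimension `m + n - 1`, which bounds the number of steps.
-/

def TP (m n : ℕ) (u : Fin m → ℝ) (v : Fin n → ℝ) : Set (Matrix (Fin m) (Fin n) ℝ) :=
  {y | (∀ i j, 0 ≤ y i j) ∧ (∀ i, ∑ j, y i j = u i) ∧ (∀ j, ∑ i, y i j = v j)}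

def IsCircuit (m n : ℕ) (g : Matrix (Fin m) (Fin n) ℝ) : Prop :=
  g ≠ 0 ∧ (∀ i, ∑ j, g i j = 0) ∧ (∀ j, ∑ i, g i j = 0) ∧
    ∀ h : Matrix (Fin m) (Fin n) ℝ, h ≠ 0 → (∀ i, ∑ j, h i j = 0) →
      (∀ j, ∑ i, h i j = 0) →
      {p : Fin m × Fin n | h p.1 p.2 ≠ 0} ⊆ {p : Fin m × Fin n | g p.1 p.2 ≠ 0} →
      {p : Fin m × Fin n | h p.1 p.2 ≠ 0} = {p : Fin m × Fin n | g p.1 p.2 ≠ 0}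

theorem exists_maximal_step {ι : Type*} [Fintype ι] {d g : ι → ℝ} (h : ∃ p, 0 < g p * d p) :
    ∃ α > 0, (∀ p, 0 < g p * d p → α * g p ∈ Set.uIcc 0 (d p)) ∧
      ∃ p, g p ≠ 0 ∧ α * g p = d p := by
  classical
  obtain ⟨q, hq, hmin⟩ := (Finset.univ.filter fun p => 0 < g p * d p).exists_min_image
    (fun p => d p / g p) (by simpa [Finset.Nonempty] using h)
  simp only [Finset.mem_filter, Finset.mem_univ, true_and] at hq hmin
  have hgq : g q ≠ 0 := by rintro h0; simp [h0] at hq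
  have ratio_pos : ∀ p, 0 < g p * d p → 0 < d p / g p := fun p hp => by
    rcases mul_pos_iff.mp hp with ⟨hg, hd⟩ | ⟨hg, hd⟩
    · exact div_pos hd hg
    · exact div_pos_of_neg_of_neg hd hg
  refine ⟨d q / g q, ratio_pos q hq, fun p hp => ?_, q, hgq, by field_simp⟩
  have hle := hmin p hp
  have hα := ratio_pos q hq
  rcases mul_pos_iff.mp hp with ⟨hg, hd⟩ | ⟨hg, hd⟩
  · exact Set.mem_uIcc.mpr (.inl ⟨(mul_pos hα hg).le, (le_div_iff₀ hg).mp hle⟩)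
  · exact Set.mem_uIcc.mpr (.inr ⟨(le_div_iff_of_neg hg).mp hle, (mul_neg_of_pos_of_neg hα hg).le⟩)

namespace TransportationPolytope

variable {m n : ℕ} {u : Fin m → ℝ} {v : Fin n → ℝ}

def support (x : Matrix (Fin m) (Fin n) ℝ) : Set (Fin m × Fin n) := {p | x p.1 p.2 ≠ 0}

@[simp]
theorem mem_support {x : Matrix (Fin m) (Fin n) ℝ} {i : Fin m} {j : Fin n} :
    (i, j) ∈ support x ↔ x i j ≠ 0 := Iff.rfl

theorem support_subset_iff {x : Matrix (Fin m) (Fin n) ℝ} {T : Set (Fin m × Fin n)} :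
    support x ⊆ T ↔ ∀ i j, (i, j) ∉ T → x i j = 0 := by
  simp only [support, Set.subset_def, Set.mem_ofPred_eq, Prod.forall]
  exact forall₂_congr fun i j => not_imp_comm

theorem support_neg (x : Matrix (Fin m) (Fin n) ℝ) : support (-x) = support x := by
  simp [support]

theorem support_sub_subset (x y : Matrix (Fin m) (Fin n) ℝ) :
    support (x - y) ⊆ support x ∪ support y := fun p hp => by
  by_contra h
  simp_all [support]

variable (m n) in
def margins : Matrix (Fin m) (Fin n) ℝ →ₗ[ℝ] (Fin m → ℝ) × (Fin n → ℝ) where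
  toFun x := (fun i => ∑ j, x i j, fun j => ∑ i, x i j)
  map_add' x y := by ext <;> simp [Finset.sum_add_distrib]
  map_smul' c x := by ext <;> simp [Finset.mul_sum]

theorem margins_eq_zero_iff {x : Matrix (Fin m) (Fin n) ℝ} :
    margins m n x = 0 ↔ (∀ i, ∑ j, x i j = 0) ∧ ∀ j, ∑ i, x i j = 0 := by
  simp [margins, funext_iff]

theorem mem_TP_iff {x : Matrix (Fin m) (Fin n) ℝ} :
    x ∈ TP m n u v ↔ (∀ i j, 0 ≤ x i j) ∧ margins m n x = (u, v) := by
  simp [TP, margins, Prod.ext_iff, funext_iff]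

theorem margins_sub_eq_zero {x y : Matrix (Fin m) (Fin n) ℝ} (hx : x ∈ TP m n u v)
    (hy : y ∈ TP m n u v) : margins m n (x - y) = 0 := by
  rw [map_sub, (mem_TP_iff.mp hx).2, (mem_TP_iff.mp hy).2, sub_self]

theorem add_mem_TP {x g : Matrix (Fin m) (Fin n) ℝ} (hx : x ∈ TP m n u v)
    (hg : margins m n g = 0) (hnonneg : ∀ i j, 0 ≤ x i j + g i j) : x + g ∈ TP m n u v :=
  mem_TP_iff.mpr ⟨hnonneg, by rw [map_add, hg, add_zero, (mem_TP_iff.mp hx).2]⟩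

/-- The cycle space of the bipartite graph on rows and columns with edge set `T`. -/
def cycleSpace (T : Set (Fin m × Fin n)) : Submodule ℝ (Matrix (Fin m) (Fin n) ℝ) where
  carrier := {x | support x ⊆ T ∧ margins m n x = 0}
  add_mem' {x y} hx hy := by
    simp_all only [Set.mem_ofPred_eq, support_subset_iff, map_add, add_zero]
    exact ⟨fun i j hij => by simp [hx.1 i j hij, hy.1 i j hij], trivial⟩
  zero_mem' := by simp [support_subset_iff]
  smul_mem' c x hx := by
    simp_all only [Set.mem_ofPred_eq, support_subset_iff, map_smul, smul_zero]
    exact ⟨fun i j hij => by simp [hx.1 i j hij], trivial⟩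

theorem cycleSpace_mono {S T : Set (Fin m × Fin n)} (h : S ⊆ T) :
    cycleSpace S ≤ cycleSpace T :=
  fun _ hx => ⟨hx.1.trans h, hx.2⟩

theorem isCircuit_iff {g : Matrix (Fin m) (Fin n) ℝ} :
    IsCircuit m n g ↔ g ≠ 0 ∧ margins m n g = 0 ∧ ∀ h, h ≠ 0 → margins m n h = 0 →
      support h ⊆ support g → support h = support g := by
  simp only [IsCircuit, margins_eq_zero_iff, and_imp, and_assoc]
  rfl

def Conformal (g d : Matrix (Fin m) (Fin n) ℝ) : Prop :=
  ∀ i j, g i j ≠ 0 → 0 < g i j * d i j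

theorem Conformal.refl (d : Matrix (Fin m) (Fin n) ℝ) : Conformal d d :=
  fun _ _ h => mul_self_pos.mpr h

theorem Conformal.trans {a b c : Matrix (Fin m) (Fin n) ℝ} (hab : Conformal a b)
    (hbc : Conformal b c) : Conformal a c := fun i j ha => by
  have h1 := hab i j ha
  have h2 := hbc i j (by rintro hb; simp [hb] at h1)
  have : 0 < a i j * c i j * (b i j * b i j) := by nlinarith
  exact pos_of_mul_pos_left this (mul_self_nonneg _)

theorem Conformal.support_subset {g d : Matrix (Fin m) (Fin n) ℝ} (h : Conformal g d) :
    support g ⊆ support d := fun p hp hd => by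
  simpa [hd] using h p.1 p.2 hp

theorem exists_conformal_ssubset_of_not_isCircuit {h : Matrix (Fin m) (Fin n) ℝ} (hne : h ≠ 0)
    (hm : margins m n h = 0) (hc : ¬IsCircuit m n h) :
    ∃ h₂, h₂ ≠ 0 ∧ margins m n h₂ = 0 ∧ Conformal h₂ h ∧ support h₂ ⊂ support h := by
  obtain ⟨h', hne', hm', hlt'⟩ : ∃ h', h' ≠ 0 ∧ margins m n h' = 0 ∧ support h' ⊂ support h := by
    simp only [isCircuit_iff, hne, hm, ne_eq, not_false_eq_true, true_and, not_forall] at hc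
    obtain ⟨h', hne', hm', hsub, hneq⟩ := hc
    exact ⟨h', hne', hm', ssubset_of_subset_of_ne hsub hneq⟩
  -- Replacing `h'` by `-h'` if necessary, `h'` agrees in sign with `h` somewhere.
  obtain ⟨s, hms, hlt, i₁, j₁, hpos⟩ : ∃ s, margins m n s = 0 ∧ support s ⊂ support h ∧
      ∃ i j, 0 < s i j * h i j := by
    obtain ⟨i₁, j₁, h'ij⟩ : ∃ i j, h' i j ≠ 0 := by simpa [← Matrix.ext_iff] using hne'
    have hij : h' i₁ j₁ * h i₁ j₁ ≠ 0 :=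
      mul_ne_zero h'ij (mem_support.mp (hlt'.subset (mem_support.mpr h'ij)))
    rcases hij.lt_or_gt with hneg | hpos
    · exact ⟨-h', by simp [hm'], by rwa [support_neg], i₁, j₁, by simpa using hneg⟩
    · exact ⟨h', hm', hlt', i₁, j₁, hpos⟩
  obtain ⟨t, ht, hstep, ⟨i₀, j₀⟩, hs₀, ht₀⟩ :=
    exists_maximal_step (d := fun p => h p.1 p.2) (g := fun p => s p.1 p.2) ⟨(i₁, j₁), hpos⟩
  have hconf : Conformal (h - t • s) h := fun i j hij => by
    simp only [Matrix.sub_apply, Matrix.smul_apply, smul_eq_mul] at hij ⊢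
    by_cases hp : 0 < s i j * h i j
    · have hh : h i j ≠ 0 := by rintro h0; simp [h0] at hp
      refine lt_of_le_of_ne ?_ (mul_ne_zero hij hh).symm
      rcases Set.mem_uIcc.mp (hstep (i, j) hp) with ⟨h1, h2⟩ | ⟨h1, h2⟩ <;> nlinarith
    · have hh : h i j ≠ 0 := fun h0 => hij <| by
        simp [h0, show s i j = 0 by by_contra hs; exact hlt.subset (mem_support.mpr hs) h0]
      nlinarith [mul_self_pos.mpr hh]
  refine ⟨h - t • s, ?_, by simp [hm, hms], hconf, ?_⟩
  · obtain ⟨⟨i, j⟩, hh, hs⟩ := Set.exists_of_ssubset hlt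
    intro h0
    have hij := congrFun (congrFun h0 i) j
    simp [show s i j = 0 by simpa using hs] at hij
    exact mem_support.mp hh hij
  · refine ssubset_of_subset_of_ne hconf.support_subset fun heq => ?_
    have h₀ : (i₀, j₀) ∈ support h := hlt.subset hs₀
    rw [← heq] at h₀
    exact h₀ (by simp [← ht₀])

theorem exists_isCircuit_conformal {d : Matrix (Fin m) (Fin n) ℝ} (hd : d ≠ 0)
    (hm : margins m n d = 0) : ∃ g, IsCircuit m n g ∧ Conformal g d := by
  suffices ∀ S, ∀ d, support d = S → d ≠ 0 → margins m n d = 0 →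
      ∃ g, IsCircuit m n g ∧ Conformal g d from this _ d rfl hd hm
  intro S
  induction S using WellFoundedLT.induction with
  | ind S ih =>
    rintro d rfl hd hm
    by_cases hc : IsCircuit m n d
    · exact ⟨d, hc, .refl d⟩
    · obtain ⟨h₂, hne, hm₂, hconf, hlt⟩ := exists_conformal_ssubset_of_not_isCircuit hd hm hc
      obtain ⟨g, hg, hg₂⟩ := ih _ hlt h₂ rfl hne hm₂
      exact ⟨g, hg, hg₂.trans hconf⟩

theorem cycleSpace_support_eq_bot_of_mem_extremePoints {O : Matrix (Fin m) (Fin n) ℝ}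
    (hO : O ∈ Set.extremePoints ℝ (TP m n u v)) : cycleSpace (support O) = ⊥ := by
  refine (Submodule.eq_bot_iff _).mpr fun g ⟨hsub, hg⟩ => ?_
  by_contra hg0
  have hOpos : ∀ i j, g i j ≠ 0 → 0 < |g i j| * O i j := fun i j hgij =>
    mul_pos (abs_pos.mpr hgij) ((hO.1.1 i j).lt_of_ne' (hsub (mem_support.mpr hgij)))
  obtain ⟨i₁, j₁, hg₁⟩ : ∃ i j, g i j ≠ 0 := by simpa [← Matrix.ext_iff] using hg0
  obtain ⟨ε, hε, hsmall, -⟩ := exists_maximal_step (d := fun p => O p.1 p.2)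
    (g := fun p => |g p.1 p.2|) ⟨(i₁, j₁), hOpos i₁ j₁ hg₁⟩
  have hbound : ∀ i j, ε * |g i j| ≤ O i j := fun i j => by
    by_cases hgij : g i j = 0
    · simpa [hgij] using hO.1.1 i j
    · exact (Set.uIcc_of_le (hO.1.1 i j) ▸ hsmall (i, j) (hOpos i j hgij)).2
  have hmem : ∀ c, |c| ≤ ε → O + c • g ∈ TP m n u v := fun c hc =>
    add_mem_TP hO.1 (by simp [hg]) fun i j => by
      have h1 : |c * g i j| ≤ ε * |g i j| := by
        rw [abs_mul]; exact mul_le_mul_of_nonneg_right hc (abs_nonneg _)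
      simp only [Matrix.smul_apply, smul_eq_mul]
      linarith [neg_abs_le (c * g i j), hbound i j]
  have hseg : O ∈ openSegment ℝ (O + (-ε) • g) (O + ε • g) :=
    ⟨1 / 2, 1 / 2, by norm_num, by norm_num, by norm_num, by module⟩
  have hεg := hO.2 (hmem _ (by simp [abs_of_pos hε])) (hmem _ (abs_of_pos hε).le) hseg
  simp [hε.ne', hg0] at hεg

open Classical in
noncomputable def restrict (T : Set (Fin m × Fin n)) :
    Matrix (Fin m) (Fin n) ℝ →ₗ[ℝ] Matrix (Fin m) (Fin n) ℝ where
  toFun x := Matrix.of fun i j => if (i, j) ∈ T then x i j else 0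
  map_add' x y := by ext i j; by_cases (i, j) ∈ T <;> simp [*]
  map_smul' c x := by ext i j; by_cases (i, j) ∈ T <;> simp [*]

theorem support_restrict_subset (T : Set (Fin m × Fin n)) (x : Matrix (Fin m) (Fin n) ℝ) :
    support (restrict T x) ⊆ T := fun p hp => by
  by_contra hpT
  simp [restrict, support, hpT] at hp

theorem disjoint_support_of_restrict_eq_zero {T : Set (Fin m × Fin n)}
    {x : Matrix (Fin m) (Fin n) ℝ} (hx : restrict T x = 0) : Disjoint (support x) T :=
  Set.disjoint_left.mpr fun p hp hpT => hp <| by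
    simpa [restrict, hpT] using congrFun (congrFun hx p.1) p.2

variable (m n) in
def marginBalance : ((Fin m → ℝ) × (Fin n → ℝ)) →ₗ[ℝ] ℝ where
  toFun rc := ∑ i, rc.1 i - ∑ j, rc.2 j
  map_add' r c := by simp [Finset.sum_add_distrib]; ring
  map_smul' c r := by simp [← Finset.mul_sum]; ring

theorem margins_mem_ker_marginBalance (x : Matrix (Fin m) (Fin n) ℝ) :
    margins m n x ∈ LinearMap.ker (marginBalance m n) := by
  simpa [marginBalance, margins, sub_eq_zero] using Finset.sum_comm

theorem finrank_ker_marginBalance :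
    Module.finrank ℝ (LinearMap.ker (marginBalance m n)) = m + n - 1 := by
  have hdim : Module.finrank ℝ ((Fin m → ℝ) × (Fin n → ℝ)) = m + n := by simp
  by_cases hmn : m + n = 0
  · have := Submodule.finrank_le (LinearMap.ker (marginBalance m n))
    omega
  · have hne : marginBalance m n ≠ 0 := fun h0 => by
      rcases Nat.eq_zero_or_pos m with hm | hm
      · simpa [marginBalance] using
          LinearMap.congr_fun h0 (0, Pi.single ⟨0, by omega⟩ 1)
      · simpa [marginBalance] using LinearMap.congr_fun h0 (Pi.single ⟨0, hm⟩ 1, 0)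
    have := Module.Dual.finrank_ker_add_one_of_ne_zero hne
    omega

theorem finrank_cycleSpace_union_le {O F : Matrix (Fin m) (Fin n) ℝ}
    (hO : cycleSpace (support O) = ⊥) (hF : cycleSpace (support F) = ⊥) :
    Module.finrank ℝ (cycleSpace (support O ∪ support F)) ≤ m + n - 1 := by
  let W := cycleSpace (support O ∪ support F)
  let f : W →ₗ[ℝ] LinearMap.ker (marginBalance m n) :=
    LinearMap.codRestrict _ (margins m n ∘ₗ restrict (support O) ∘ₗ W.subtype)
      fun x => margins_mem_ker_marginBalance _
  have hf : Function.Injective f := by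
    rw [← LinearMap.ker_eq_bot, LinearMap.ker_eq_bot']
    rintro ⟨x, hxS, hxm⟩ hx
    have hxO : restrict (support O) x ∈ cycleSpace (support O) :=
      ⟨support_restrict_subset _ _, by simpa [f] using congrArg Subtype.val hx⟩
    rw [hO, Submodule.mem_bot] at hxO
    have hxF : x ∈ cycleSpace (support F) :=
      ⟨Disjoint.subset_right_of_subset_union hxS (disjoint_support_of_restrict_eq_zero hxO), hxm⟩
    rw [hF, Submodule.mem_bot] at hxF
    exact Subtype.ext hxF
  simpa [finrank_ker_marginBalance] using LinearMap.finrank_le_finrank_of_injective hf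

theorem exists_isCircuit_step {y F : Matrix (Fin m) (Fin n) ℝ} (hy : y ∈ TP m n u v)
    (hF : F ∈ TP m n u v) (hne : y ≠ F) :
    ∃ (g : Matrix (Fin m) (Fin n) ℝ) (α : ℝ), IsCircuit m n g ∧ 0 < α ∧
      y + α • g ∈ TP m n u v ∧
      cycleSpace (support (F - (y + α • g))) < cycleSpace (support (F - y)) := by
  obtain ⟨g, hg, hconf⟩ :=
    exists_isCircuit_conformal (sub_ne_zero.mpr hne.symm) (margins_sub_eq_zero hF hy)
  have hgm : margins m n g = 0 := (isCircuit_iff.mp hg).2.1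
  obtain ⟨i₁, j₁, hg₁⟩ : ∃ i j, g i j ≠ 0 := by simpa [← Matrix.ext_iff] using hg.1
  obtain ⟨α, hα, hstep, ⟨i₀, j₀⟩, hg₀, hα₀⟩ := exists_maximal_step
    (d := fun p => (F - y) p.1 p.2) (g := fun p => g p.1 p.2) ⟨(i₁, j₁), hconf i₁ j₁ hg₁⟩
  refine ⟨g, α, hg, hα, add_mem_TP hy (by simp [hgm]) fun i j => ?_, ?_⟩
  · by_cases hgij : g i j = 0
    · simpa [hgij] using hy.1 i j
    · have := Set.mem_uIcc.mp (hstep (i, j) (hconf i j hgij))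
      simp only [Matrix.sub_apply, Matrix.smul_apply, smul_eq_mul] at this ⊢
      rcases this with h | h <;> linarith [hy.1 i j, hF.1 i j]
  · have hgmem : g ∈ cycleSpace (support (F - y)) := ⟨hconf.support_subset, hgm⟩
    refine lt_of_le_of_ne (cycleSpace_mono fun p hp hd => hp ?_) fun hc => ?_
    · have hgp : g p.1 p.2 = 0 := by_contra fun hgp => hconf.support_subset hgp hd
      simp only [Matrix.sub_apply, Matrix.add_apply, Matrix.smul_apply, smul_eq_mul,
        hgp] at hd ⊢
      linarith
    · rw [← hc] at hgmem
      refine hgmem.1 hg₀ ?_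
      simp only [Matrix.sub_apply, Matrix.add_apply, Matrix.smul_apply, smul_eq_mul] at hα₀ ⊢
      linarith

def IsFeasibleCircuitWalk (u : Fin m → ℝ) (v : Fin n → ℝ) (y : ℕ → Matrix (Fin m) (Fin n) ℝ)
    (k : ℕ) : Prop :=
  (∀ i ≤ k, y i ∈ TP m n u v) ∧ ∀ i < k, ∃ g : Matrix (Fin m) (Fin n) ℝ, ∃ α : ℝ,
    IsCircuit m n g ∧ 0 < α ∧ y (i + 1) = y i + α • g

theorem isFeasibleCircuitWalk_const {y : Matrix (Fin m) (Fin n) ℝ} (hy : y ∈ TP m n u v) :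
    IsFeasibleCircuitWalk u v (fun _ => y) 0 :=
  ⟨fun _ _ => hy, fun _ hi => absurd hi (Nat.not_lt_zero _)⟩

theorem IsFeasibleCircuitWalk.cons {w : ℕ → Matrix (Fin m) (Fin n) ℝ} {k : ℕ}
    {y g : Matrix (Fin m) (Fin n) ℝ} {α : ℝ} (hw : IsFeasibleCircuitWalk u v w k)
    (hy : y ∈ TP m n u v) (hg : IsCircuit m n g) (hα : 0 < α) (h0 : w 0 = y + α • g) :
    IsFeasibleCircuitWalk u v (fun | 0 => y | i + 1 => w i) (k + 1) := by
  refine ⟨fun i hi => ?_, fun i hi => ?_⟩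
  · cases i with
    | zero => exact hy
    | succ i => exact hw.1 i (by omega)
  · cases i with
    | zero => exact ⟨g, α, hg, hα, h0⟩
    | succ i => exact hw.2 i (by omega)

theorem exists_isFeasibleCircuitWalk {y F : Matrix (Fin m) (Fin n) ℝ} (hy : y ∈ TP m n u v)
    (hF : F ∈ TP m n u v) :
    ∃ k ≤ Module.finrank ℝ (cycleSpace (support (F - y))), ∃ w : ℕ → Matrix (Fin m) (Fin n) ℝ,
      w 0 = y ∧ w k = F ∧ IsFeasibleCircuitWalk u v w k := by
  obtain ⟨N, hN⟩ : ∃ N, Module.finrank ℝ (cycleSpace (support (F - y))) = N := ⟨_, rfl⟩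
  induction N using Nat.strong_induction_on generalizing y with
  | _ N ih =>
    by_cases hyF : y = F
    · exact ⟨0, Nat.zero_le _, fun _ => y, rfl, hyF, isFeasibleCircuitWalk_const hy⟩
    · obtain ⟨g, α, hg, hα, hy', hlt⟩ := exists_isCircuit_step hy hF hyF
      have hN' := hN ▸ Submodule.finrank_lt_finrank_of_lt hlt
      obtain ⟨k, hk, w, hw0, hwk, hw⟩ := ih _ hN' hy' rfl
      exact ⟨k + 1, by omega, _, rfl, hwk, hw.cons hy hg hα hw0⟩

end TransportationPolytope

theorem stmt_0_general (m n : ℕ)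
    (u : Fin m → ℝ) (v : Fin n → ℝ)
    (O F : Matrix (Fin m) (Fin n) ℝ)
    (hO : O ∈ Set.extremePoints ℝ (TP m n u v))
    (hF : F ∈ Set.extremePoints ℝ (TP m n u v)) :
    ∃ k ≤ m + n - 1, ∃ y : ℕ → Matrix (Fin m) (Fin n) ℝ,
      y 0 = O ∧ y k = F ∧
      (∀ i ≤ k, y i ∈ TP m n u v) ∧
      (∀ i < k, ∃ g : Matrix (Fin m) (Fin n) ℝ, ∃ α : ℝ,
        IsCircuit m n g ∧ 0 < α ∧ y (i + 1) = y i + α • g) := by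
  obtain ⟨k, hk, y, h0, hk', hwalk⟩ :=
    TransportationPolytope.exists_isFeasibleCircuitWalk hO.1 hF.1
  refine ⟨k, hk.trans ?_, y, h0, hk', hwalk⟩
  open TransportationPolytope in
  calc Module.finrank ℝ (cycleSpace (support (F - O)))
      ≤ Module.finrank ℝ (cycleSpace (support F ∪ support O)) :=
        Submodule.finrank_mono (cycleSpace_mono (support_sub_subset F O))
    _ ≤ m + n - 1 :=
        finrank_cycleSpace_union_le (cycleSpace_support_eq_bot_of_mem_extremePoints hF)
          (cycleSpace_support_eq_bot_of_mem_extremePoints hO)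

/-- every m×n transportation polytope with positive margins admits, between
any two vertices, a feasible circuit walk of length at most m + n - 1. -/
theorem stmt_0 (m n : ℕ) (hm : 0 < m) (hn : 0 < n)
    (u : Fin m → ℝ) (v : Fin n → ℝ)
    (hu : ∀ i, 0 < u i) (hv : ∀ j, 0 < v j)
    (huv : ∑ i, u i = ∑ j, v j)
    (O F : Matrix (Fin m) (Fin n) ℝ)
    (hO : O ∈ Set.extremePoints ℝ (TP m n u v))
    (hF : F ∈ Set.extremePoints ℝ (TP m n u v)) :
    ∃ k ≤ m + n - 1, ∃ y : ℕ → Matrix (Fin m) (Fin n) ℝ,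
      y 0 = O ∧ y k = F ∧
      (∀ i ≤ k, y i ∈ TP m n u v) ∧
      (∀ i < k, ∃ g : Matrix (Fin m) (Fin n) ℝ, ∃ α : ℝ,
        IsCircuit m n g ∧ 0 < α ∧ y (i + 1) = y i + α • g) :=
  stmt_0_general m n u v O F hO hF
end

section
/- Let O and F be two vertices of a (possibly degenerate) 2×n transportation polytope P(u,v). Then there exists a feasible maximal circuit walk from O to F of length at most |supp(O) \ supp(F)|. -/
/-- The support of a matrix: the set of positions with positive entry. -/
noncomputable def suppF (m n : ℕ) (y : Matrix (Fin m) (Fin n) ℝ) : Finset (Fin m × Fin n) :=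
  Finset.univ.filter (fun p => 0 < y p.1 p.2)

/-- A feasible maximal circuit walk of length k from y 0 to y k in the m×n
transportation polytope: all points are feasible, each step applies a circuit with a
positive step length, and each step length is maximal subject to feasibility. -/
def FMCircuitWalk (m n : ℕ) (u : Fin m → ℝ) (v : Fin n → ℝ) (k : ℕ)
    (y : ℕ → Matrix (Fin m) (Fin n) ℝ) : Prop :=
  (∀ i ≤ k, y i ∈ TP m n u v) ∧
  ∀ i < k, ∃ g : Matrix (Fin m) (Fin n) ℝ, ∃ α : ℝ,
    IsCircuit m n g ∧ 0 < α ∧ y (i + 1) = y i + α • g ∧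
    ∀ β : ℝ, α < β → y i + β • g ∉ TP m n u v

/-!
A point `y` of the `2 × n` transportation polytope is determined by its row `0`. A vertex `F` has
at most one column `j₀` with two positive entries; every other column of `F` has a zero. While
`y ≠ F`, transfer mass in row `0` from a column where `y` exceeds `F` to one where it falls short,
along the circuit supported on these two columns, until one of them agrees with `F`. The pair can
be chosen so that this column is not `j₀`; then the zero of `F` in that column is reached by `y`,
so the step is maximal. Since row sums agree, `y` and `F` never differ in exactly one column, so
the number of differing columns minus one drops at each step. Finally every differing column
other than `j₀` contains an entry that is positive in `O` and zero in `F`.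
-/

open Finset

section Descent

variable {α : Type*} {S : Set α} {R : α → α → Prop} {μ : α → ℕ} {F : α}

theorem exists_chain_of_descent (hstep : ∀ y ∈ S, y ≠ F → ∃ y' ∈ S, R y y' ∧ μ y' < μ y)
    {y : α} (hy : y ∈ S) :
    ∃ k ≤ μ y, ∃ w : ℕ → α, w 0 = y ∧ w k = F ∧ (∀ i ≤ k, w i ∈ S) ∧
      ∀ i < k, R (w i) (w (i + 1)) := by
  induction hμ : μ y using Nat.strong_induction_on generalizing y with
  | _ m ih =>
  by_cases hyF : y = F
  · exact ⟨0, Nat.zero_le _, fun _ => y, rfl, hyF, fun _ _ => hy, fun _ h => absurd h (by omega)⟩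
  obtain ⟨y', hy', hR, hlt⟩ := hstep y hy hyF
  obtain ⟨k, hk, w, hw0, hwk, hwS, hwR⟩ := ih _ (hμ ▸ hlt) hy' rfl
  refine ⟨k + 1, by omega, fun | 0 => y | i + 1 => w i, rfl, hwk, ?_, ?_⟩
  · rintro (_ | i) hi
    exacts [hy, hwS i (by omega)]
  · rintro (_ | i) hi
    exacts [show R y (w 0) from hw0 ▸ hR, hwR i (by omega)]

end Descent

theorem eq_zero_of_sub_add_mem_extremePoints {E : Type*} [AddCommGroup E] [Module ℝ E]
    {A : Set E} {x g : E} (hx : x ∈ Set.extremePoints ℝ A) (hsub : x - g ∈ A) (hadd : x + g ∈ A) :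
    g = 0 := by
  have := (mem_extremePoints.1 hx).2 _ hsub _ hadd (mem_openSegment_sub_add x g)
  simpa using this.1

theorem exists_neg_of_sum_eq_zero {ι : Type*} [Fintype ι] {d : ι → ℝ} (hd : ∑ i, d i = 0)
    (hne : d ≠ 0) : ∃ i, d i < 0 := by
  obtain ⟨i, -, hi⟩ := exists_pos_of_sum_zero_of_exists_nonzero (s := univ) (fun i => -d i)
    (by simp [hd]) (by simpa [funext_iff] using hne)
  exact ⟨i, neg_pos.1 hi⟩

theorem neg_le_of_sum_eq_zero {ι : Type*} [Fintype ι] [DecidableEq ι] {d : ι → ℝ}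
    (hd : ∑ i, d i = 0) {i₀ : ι} (hoff : ∀ i ≠ i₀, d i ≤ 0) {j : ι} (hj : j ≠ i₀) :
    -d j ≤ d i₀ := by
  have hsplit := add_sum_erase univ d (mem_univ i₀)
  have : -d j ≤ ∑ i ∈ univ.erase i₀, -d i :=
    single_le_sum (f := fun i => -d i) (fun i hi => by simpa using hoff i (ne_of_mem_erase hi))
      (mem_erase.2 ⟨hj, mem_univ j⟩)
  rw [sum_neg_distrib] at this
  linarith

/-- A step of size `min (-d j) (d j')` along the pair `j, j'` clears `j` or `j'`; the pair can be
chosen so that an index it clears is not `i₀`. -/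
theorem exists_transfer_pair {ι : Type*} [Fintype ι] [DecidableEq ι] {d : ι → ℝ}
    (hd : ∑ i, d i = 0) (hne : d ≠ 0) (i₀ : ι) :
    ∃ j j', d j < 0 ∧ 0 < d j' ∧ ((j ≠ i₀ ∧ -d j ≤ d j') ∨ (j' ≠ i₀ ∧ d j' ≤ -d j)) := by
  have hd' : ∑ i, -d i = 0 := by simp [hd]
  by_cases hsurplus : ∃ j', 0 < d j' ∧ j' ≠ i₀
  · obtain ⟨j', hj', hj'i₀⟩ := hsurplus
    by_cases hdeficit : ∃ j, d j < 0 ∧ j ≠ i₀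
    · obtain ⟨j, hj, hji₀⟩ := hdeficit
      rcases le_total (-d j) (d j') with h | h
      exacts [⟨j, j', hj, hj', .inl ⟨hji₀, h⟩⟩, ⟨j, j', hj, hj', .inr ⟨hj'i₀, h⟩⟩]
    push Not at hdeficit
    obtain ⟨j, hj⟩ := exists_neg_of_sum_eq_zero hd hne
    obtain rfl := hdeficit j hj
    have := neg_le_of_sum_eq_zero hd' (fun i hi => by simpa using hdeficit i |>.mt hi) hj'i₀
    exact ⟨j, j', hj, hj', .inr ⟨hj'i₀, by simpa using this⟩⟩
  push Not at hsurplus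
  obtain ⟨j', hj'⟩ := exists_neg_of_sum_eq_zero hd' (neg_ne_zero.2 hne)
  obtain rfl := hsurplus j' (by simpa using hj')
  obtain ⟨j, hj⟩ := exists_neg_of_sum_eq_zero hd hne
  have hji₀ : j ≠ j' := by rintro rfl; simp at hj'; linarith
  have := neg_le_of_sum_eq_zero hd (fun i hi => not_lt.1 (hsurplus i |>.mt hi)) hji₀
  exact ⟨j, j', hj, by simpa using hj', .inl ⟨hji₀, this⟩⟩

section TransportationPolytope

variable {m n : ℕ} {u : Fin m → ℝ} {v : Fin n → ℝ} {y g : Matrix (Fin m) (Fin n) ℝ}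

theorem add_smul_mem_TP (hy : y ∈ TP m n u v) (hrow : ∀ i, ∑ j, g i j = 0)
    (hcol : ∀ j, ∑ i, g i j = 0) {t : ℝ} (hnonneg : ∀ i j, 0 ≤ y i j + t * g i j) :
    y + t • g ∈ TP m n u v := by
  refine ⟨hnonneg, fun i => ?_, fun j => ?_⟩
  · simp [sum_add_distrib, ← mul_sum, hrow, hy.2.1]
  · simp [sum_add_distrib, ← mul_sum, hcol, hy.2.2]

theorem add_smul_notMem_TP {α β : ℝ} {i : Fin m} {j : Fin n} (hzero : y i j + α * g i j = 0)
    (hneg : g i j < 0) (hαβ : α < β) : y + β • g ∉ TP m n u v := by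
  intro h
  have := h.1 i j
  simp only [Matrix.add_apply, Matrix.smul_apply, smul_eq_mul] at this
  nlinarith

theorem mem_suppF_sdiff {O F : Matrix (Fin m) (Fin n) ℝ} (hO : O ∈ TP m n u v) {i : Fin m}
    {l : Fin n} (hne : O i l ≠ F i l) (hF : F i l = 0) : (i, l) ∈ suppF m n O \ suppF m n F := by
  simp only [suppF, mem_sdiff, mem_filter, mem_univ, true_and, hF, lt_irrefl, not_false_eq_true,
    and_true]
  exact (hO.1 i l).lt_of_ne' (hF ▸ hne)

end TransportationPolytope

def IsMaxCircuitStep (m n : ℕ) (u : Fin m → ℝ) (v : Fin n → ℝ)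
    (y y' : Matrix (Fin m) (Fin n) ℝ) : Prop :=
  ∃ g : Matrix (Fin m) (Fin n) ℝ, ∃ α : ℝ, IsCircuit m n g ∧ 0 < α ∧ y' = y + α • g ∧
    ∀ β : ℝ, α < β → y + β • g ∉ TP m n u v

section Transfer

variable {n : ℕ} {j j' : Fin n}

def transfer (j j' : Fin n) : Matrix (Fin 2) (Fin n) ℝ :=
  Matrix.of ![Pi.single j 1 - Pi.single j' 1, Pi.single j' 1 - Pi.single j 1]

@[simp] theorem transfer_zero_left (hjj' : j ≠ j') : transfer j j' 0 j = 1 := by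
  simp [transfer, hjj']

@[simp] theorem transfer_one_left (hjj' : j ≠ j') : transfer j j' 1 j = -1 := by
  simp [transfer, hjj']

@[simp] theorem transfer_zero_right (hjj' : j ≠ j') : transfer j j' 0 j' = -1 := by
  simp [transfer, hjj'.symm]

@[simp] theorem transfer_one_right (hjj' : j ≠ j') : transfer j j' 1 j' = 1 := by
  simp [transfer, hjj'.symm]

theorem transfer_apply_of_ne {i : Fin 2} {l : Fin n} (hl : l ≠ j) (hl' : l ≠ j') :
    transfer j j' i l = 0 := by
  fin_cases i <;> simp [transfer, hl, hl']

theorem transfer_row_sum (hjj' : j ≠ j') (i : Fin 2) : ∑ l, transfer j j' i l = 0 := by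
  rw [Fintype.sum_eq_add j j' hjj' fun l hl => transfer_apply_of_ne hl.1 hl.2]
  fin_cases i <;> simp [hjj']

theorem transfer_col_sum (l : Fin n) : ∑ i, transfer j j' i l = 0 := by
  simp [transfer, Fin.sum_univ_two]

theorem isCircuit_transfer (hjj' : j ≠ j') : IsCircuit 2 n (transfer j j') := by
  refine ⟨fun h => by simpa [hjj'] using congrFun (congrFun h 0) j, transfer_row_sum hjj',
    transfer_col_sum, fun h hne hrow hcol hsupp => ?_⟩
  have hout : ∀ i l, l ≠ j → l ≠ j' → h i l = 0 := fun i l hl hl' => by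
    by_contra hil
    exact hsupp (a := (i, l)) hil (transfer_apply_of_ne hl hl')
  have hrow1 : ∀ l, h 1 l = -h 0 l := fun l => by
    linarith [Fin.sum_univ_two (fun i => h i l) ▸ hcol l]
  have hright : h 0 j' = -h 0 j := by
    linarith [Fintype.sum_eq_add j j' hjj' (fun l hl => hout 0 l hl.1 hl.2) ▸ hrow 0]
  have hmul : h = h 0 j • transfer j j' := by
    ext i l
    by_cases hl : l = j
    · subst hl; fin_cases i <;> simp [hjj', hrow1]
    by_cases hl' : l = j'
    · subst hl'; fin_cases i <;> simp [hjj', hrow1, hright]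
    · simp [hout i l hl hl', transfer_apply_of_ne hl hl']
  have hs : h 0 j ≠ 0 := fun hs => hne (by rw [hmul, hs, zero_smul])
  rw [hmul]
  ext p
  simp [hs]

end Transfer

section TwoRows

variable {n : ℕ} {u : Fin 2 → ℝ} {v : Fin n → ℝ} {y F : Matrix (Fin 2) (Fin n) ℝ} {j j' : Fin n}

theorem add_smul_transfer_mem_TP (hy : y ∈ TP 2 n u v) (hjj' : j ≠ j') {t : ℝ}
    (h0j : 0 ≤ y 0 j + t) (h1j : t ≤ y 1 j) (h0j' : t ≤ y 0 j') (h1j' : 0 ≤ y 1 j' + t) :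
    y + t • transfer j j' ∈ TP 2 n u v := by
  refine add_smul_mem_TP hy (transfer_row_sum hjj') transfer_col_sum fun i l => ?_
  by_cases hl : l = j
  · subst hl; fin_cases i <;> simp [hjj'] <;> linarith
  by_cases hl' : l = j'
  · subst hl'; fin_cases i <;> simp [hjj'] <;> linarith
  · simpa [transfer_apply_of_ne hl hl'] using hy.1 i l

theorem mem_TP_two_col (hy : y ∈ TP 2 n u v) (l : Fin n) : y 0 l + y 1 l = v l := by
  simpa [Fin.sum_univ_two] using hy.2.2 l

theorem eq_of_row_zero_eq (hy : y ∈ TP 2 n u v) (hF : F ∈ TP 2 n u v)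
    (h0 : ∀ l, y 0 l = F 0 l) : y = F := by
  ext i l
  fin_cases i
  · exact h0 l
  · show y 1 l = F 1 l
    linarith [h0 l, mem_TP_two_col hy l, mem_TP_two_col hF l]

theorem pure_of_fractional_of_mem_extremePoints (hF : F ∈ Set.extremePoints ℝ (TP 2 n u v))
    (hjj' : j ≠ j') (hj : F 0 j ≠ 0 ∧ F 1 j ≠ 0) : F 0 j' = 0 ∨ F 1 j' = 0 := by
  by_contra! hj'
  have hpos : ∀ i l, F i l ≠ 0 → 0 < F i l := fun i l h => (hF.1.1 i l).lt_of_ne' h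
  set ε := min (min (F 0 j) (F 1 j)) (min (F 0 j') (F 1 j'))
  have hε : 0 < ε := lt_min (lt_min (hpos _ _ hj.1) (hpos _ _ hj.2))
    (lt_min (hpos _ _ hj'.1) (hpos _ _ hj'.2))
  have h₁ : ε ≤ F 0 j := (min_le_left _ _).trans (min_le_left _ _)
  have h₂ : ε ≤ F 1 j := (min_le_left _ _).trans (min_le_right _ _)
  have h₃ : ε ≤ F 0 j' := (min_le_right _ _).trans (min_le_left _ _)
  have h₄ : ε ≤ F 1 j' := (min_le_right _ _).trans (min_le_right _ _)
  have hsub : F - ε • transfer j j' ∈ TP 2 n u v := by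
    rw [sub_eq_add_neg, ← neg_smul]
    exact add_smul_transfer_mem_TP hF.1 hjj' (by linarith) (by linarith) (by linarith)
      (by linarith)
  have hadd : F + ε • transfer j j' ∈ TP 2 n u v :=
    add_smul_transfer_mem_TP hF.1 hjj' (by linarith) h₂ h₃ (by linarith)
  have := congrFun (congrFun (eq_zero_of_sub_add_mem_extremePoints hF hsub hadd) 0) j
  simp [hjj'] at this
  linarith

theorem exists_pure_off_of_mem_extremePoints (hF : F ∈ Set.extremePoints ℝ (TP 2 n u v))
    (j₁ : Fin n) : ∃ j₀, ∀ j ≠ j₀, F 0 j = 0 ∨ F 1 j = 0 := by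
  by_cases h : ∃ j₀, F 0 j₀ ≠ 0 ∧ F 1 j₀ ≠ 0
  · obtain ⟨j₀, hj₀⟩ := h
    exact ⟨j₀, fun j hj => pure_of_fractional_of_mem_extremePoints hF hj.symm hj₀⟩
  · push Not at h
    exact ⟨j₁, fun j _ => or_iff_not_imp_left.2 (h j)⟩

end TwoRows

section Walk

variable {n : ℕ} {u : Fin 2 → ℝ} {v : Fin n → ℝ} {y F : Matrix (Fin 2) (Fin n) ℝ} {j j' : Fin n}

noncomputable def diffCols (y F : Matrix (Fin 2) (Fin n) ℝ) : Finset (Fin n) :=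
  univ.filter fun l => y 0 l ≠ F 0 l

theorem mem_diffCols {l : Fin n} : l ∈ diffCols y F ↔ y 0 l ≠ F 0 l := by
  simp [diffCols]

theorem card_diffCols_add_smul_transfer_lt (hjj' : j ≠ j') (hj : j ∈ diffCols y F)
    (hj' : j' ∈ diffCols y F) {t : ℝ}
    (hclear : (y + t • transfer j j') 0 j = F 0 j ∨ (y + t • transfer j j') 0 j' = F 0 j') :
    #(diffCols (y + t • transfer j j') F) - 1 < #(diffCols y F) - 1 := by
  have htwo : 1 < #(diffCols y F) := one_lt_card.2 ⟨j, hj, j', hj', hjj'⟩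
  have hssub : diffCols (y + t • transfer j j') F ⊂ diffCols y F := by
    refine (ssubset_iff_of_subset fun l hl => ?_).2 ?_
    · by_cases hlj : l = j
      · exact hlj ▸ hj
      by_cases hlj' : l = j'
      · exact hlj' ▸ hj'
      simpa [mem_diffCols, transfer_apply_of_ne hlj hlj'] using hl
    · rcases hclear with h | h
      exacts [⟨j, hj, fun hj => mem_diffCols.1 hj h⟩, ⟨j', hj', fun hj' => mem_diffCols.1 hj' h⟩]
  have := card_lt_card hssub
  omega

theorem exists_maxCircuitStep (hy : y ∈ TP 2 n u v) (hF : F ∈ TP 2 n u v) {j₀ : Fin n}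
    (hpure : ∀ j ≠ j₀, F 0 j = 0 ∨ F 1 j = 0) (hyF : y ≠ F) :
    ∃ y' ∈ TP 2 n u v, IsMaxCircuitStep 2 n u v y y' ∧
      #(diffCols y' F) - 1 < #(diffCols y F) - 1 := by
  set d : Fin n → ℝ := fun l => y 0 l - F 0 l
  have hd1 : ∀ l, d l = F 1 l - y 1 l := fun l => by
    linarith [mem_TP_two_col hy l, mem_TP_two_col hF l]
  have hd : ∑ l, d l = 0 := by simp [d, sum_sub_distrib, hy.2.1 0, hF.2.1 0]
  have hne : d ≠ 0 := fun h0 =>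
    hyF (eq_of_row_zero_eq hy hF fun l => sub_eq_zero.1 (congrFun h0 l))
  obtain ⟨j, j', hj, hj', hclear⟩ := exists_transfer_pair hd hne j₀
  have hjj' : j ≠ j' := by rintro rfl; linarith
  set t := min (-d j) (d j')
  have ht : 0 < t := lt_min (by linarith) hj'
  have htj : t ≤ -d j := min_le_left _ _
  have htj' : t ≤ d j' := min_le_right _ _
  have hy' : y + t • transfer j j' ∈ TP 2 n u v :=
    add_smul_transfer_mem_TP hy hjj' (by linarith [hy.1 0 j]) (by linarith [hd1 j, hF.1 1 j])
      (by linarith [hF.1 0 j']) (by linarith [hy.1 1 j'])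
  have hstep (i : Fin 2) (c : Fin n) (hc : transfer j j' i c = -1) (hzero : y i c - t = 0) :
      IsMaxCircuitStep 2 n u v y (y + t • transfer j j') :=
    ⟨_, t, isCircuit_transfer hjj', ht, rfl, fun β hβ =>
      add_smul_notMem_TP (by rw [hc]; linarith) (by rw [hc]; norm_num) hβ⟩
  have hdiff : j ∈ diffCols y F ∧ j' ∈ diffCols y F :=
    ⟨mem_diffCols.2 (sub_ne_zero.1 hj.ne), mem_diffCols.2 (sub_ne_zero.1 hj'.ne')⟩
  have hcard := card_diffCols_add_smul_transfer_lt (t := t) hjj' hdiff.1 hdiff.2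
  rcases hclear with ⟨hji₀, hle⟩ | ⟨hj'i₀, hle⟩
  · have hF1 : F 1 j = 0 := (hpure j hji₀).resolve_left (by linarith [hy.1 0 j])
    refine ⟨_, hy', hstep 1 j (transfer_one_left hjj') ?_, hcard (.inl ?_)⟩
    · linarith [hd1 j, min_eq_left hle]
    · simp only [Matrix.add_apply, Matrix.smul_apply, smul_eq_mul, transfer_zero_left hjj']
      linarith [min_eq_left hle]
  · have hF0 : F 0 j' = 0 := (hpure j' hj'i₀).resolve_right (by linarith [hy.1 1 j', hd1 j'])
    refine ⟨_, hy', hstep 0 j' (transfer_zero_right hjj') ?_, hcard (.inr ?_)⟩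
    · linarith [min_eq_right hle]
    · simp only [Matrix.add_apply, Matrix.smul_apply, smul_eq_mul, transfer_zero_right hjj']
      linarith [min_eq_right hle]

theorem card_diffCols_sub_one_le {O : Matrix (Fin 2) (Fin n) ℝ} (hO : O ∈ TP 2 n u v)
    (hF : F ∈ TP 2 n u v) {j₀ : Fin n}
    (hpure : ∀ j ≠ j₀, F 0 j = 0 ∨ F 1 j = 0) :
    #(diffCols O F) - 1 ≤ #(suppF 2 n O \ suppF 2 n F) := by
  have hsub : (diffCols O F).erase j₀ ⊆ (suppF 2 n O \ suppF 2 n F).image Prod.snd := by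
    intro l hl
    obtain ⟨hlj₀, hl⟩ := mem_erase.1 hl
    have hl0 := mem_diffCols.1 hl
    have hl1 : O 1 l ≠ F 1 l := fun h =>
      hl0 (by linarith [mem_TP_two_col hO l, mem_TP_two_col hF l])
    rcases hpure l hlj₀ with h | h
    exacts [mem_image_of_mem Prod.snd (mem_suppF_sdiff hO hl0 h),
      mem_image_of_mem Prod.snd (mem_suppF_sdiff hO hl1 h)]
  calc #(diffCols O F) - 1 ≤ #((diffCols O F).erase j₀) := pred_card_le_card_erase
    _ ≤ #((suppF 2 n O \ suppF 2 n F).image Prod.snd) := card_le_card hsub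
    _ ≤ #(suppF 2 n O \ suppF 2 n F) := card_image_le

end Walk

theorem stmt_4_general (n : ℕ) (hn : 0 < n) (u : Fin 2 → ℝ) (v : Fin n → ℝ)
    (O F : Matrix (Fin 2) (Fin n) ℝ)
    (hO : O ∈ Set.extremePoints ℝ (TP 2 n u v))
    (hF : F ∈ Set.extremePoints ℝ (TP 2 n u v)) :
    ∃ k ≤ (suppF 2 n O \ suppF 2 n F).card, ∃ y : ℕ → Matrix (Fin 2) (Fin n) ℝ,
      y 0 = O ∧ y k = F ∧ FMCircuitWalk 2 n u v k y := by
  obtain ⟨j₀, hpure⟩ := exists_pure_off_of_mem_extremePoints hF ⟨0, hn⟩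
  obtain ⟨k, hk, y, hy0, hyk, hyTP, hstep⟩ :=
    exists_chain_of_descent (R := IsMaxCircuitStep 2 n u v) (μ := fun y => #(diffCols y F) - 1)
      (fun _ hy hyF => exists_maxCircuitStep hy hF.1 hpure hyF) hO.1
  exact ⟨k, hk.trans (card_diffCols_sub_one_le hO.1 hF.1 hpure), y, hy0, hyk, hyTP, hstep⟩

/-- between any two vertices O, F of a (possibly degenerate) 2×n
transportation polytope there is a feasible maximal circuit walk of length at most
|supp(O) \ supp(F)|. -/
theorem stmt_4 (n : ℕ) (hn : 0 < n) (u : Fin 2 → ℝ) (v : Fin n → ℝ)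
    (hu : ∀ i, 0 < u i) (hv : ∀ j, 0 < v j) (huv : ∑ i, u i = ∑ j, v j)
    (O F : Matrix (Fin 2) (Fin n) ℝ)
    (hO : O ∈ Set.extremePoints ℝ (TP 2 n u v))
    (hF : F ∈ Set.extremePoints ℝ (TP 2 n u v)) :
    ∃ k ≤ (suppF 2 n O \ suppF 2 n F).card, ∃ y : ℕ → Matrix (Fin 2) (Fin n) ℝ,
      y 0 = O ∧ y k = F ∧ FMCircuitWalk 2 n u v k y :=
  stmt_4_general n hn u v O F hO hF
end

section
/- Let O and F be two vertices of a (possibly degenerate) 2×n transportation polytope P(u,v). Then either |supp(O) \ supp(F)| ≤ n − 1, or |supp(O) \ supp(F)| = n and |supp(F)| = n. -/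
/-
Every column of a point F of the polytope carries positive mass, so supp(F) meets each of
the n columns and has at least n of the 2n cells. The set supp(O) \ supp(F) lies in the
complement of supp(F), so it has at most 2n − |supp(F)| ≤ n cells, and n of them only
if |supp(F)| = n.
-/

lemma exists_pos_of_mem_TP {m n : ℕ} {u : Fin m → ℝ} {v : Fin n → ℝ} (hv : ∀ j, 0 < v j)
    {y : Matrix (Fin m) (Fin n) ℝ} (hy : y ∈ TP m n u v) (j : Fin n) : ∃ i, 0 < y i j := by
  have hsum : ∑ _i : Fin m, (0 : ℝ) < ∑ i, y i j := by simpa [hy.2.2 j] using hv j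
  simpa using Finset.exists_lt_of_sum_lt hsum

lemma card_le_card_suppF_of_mem_TP {m n : ℕ} {u : Fin m → ℝ} {v : Fin n → ℝ}
    (hv : ∀ j, 0 < v j) {y : Matrix (Fin m) (Fin n) ℝ} (hy : y ∈ TP m n u v) :
    n ≤ (suppF m n y).card := by
  choose i hi using exists_pos_of_mem_TP hv hy
  simpa using Finset.card_le_card_of_injOn (s := Finset.univ) (t := suppF m n y)
    (fun j => (i j, j)) (fun j _ => by simp [suppF, hi j]) (fun a _ b _ h => congrArg Prod.snd h)

theorem stmt_6_general (n : ℕ) (u : Fin 2 → ℝ) (v : Fin n → ℝ)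
    (hv : ∀ j, 0 < v j)
    (O F : Matrix (Fin 2) (Fin n) ℝ)
    (hF : F ∈ Set.extremePoints ℝ (TP 2 n u v)) :
    (suppF 2 n O \ suppF 2 n F).card ≤ n - 1 ∨
      ((suppF 2 n O \ suppF 2 n F).card = n ∧ (suppF 2 n F).card = n) := by
  have hF_large : n ≤ (suppF 2 n F).card := card_le_card_suppF_of_mem_TP hv hF.1
  have hdisjoint : (suppF 2 n O \ suppF 2 n F).card + (suppF 2 n F).card ≤ 2 * n := by
    rw [Finset.card_sdiff_add_card]
    simpa using Finset.card_le_univ (suppF 2 n O ∪ suppF 2 n F)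
  omega

/-- for vertices O, F of a (possibly degenerate) 2×n transportation
polytope, either |supp(O) \ supp(F)| ≤ n − 1, or |supp(O) \ supp(F)| = n and
|supp(F)| = n. -/
theorem stmt_6 (n : ℕ) (hn : 0 < n) (u : Fin 2 → ℝ) (v : Fin n → ℝ)
    (hu : ∀ i, 0 < u i) (hv : ∀ j, 0 < v j) (huv : ∑ i, u i = ∑ j, v j)
    (O F : Matrix (Fin 2) (Fin n) ℝ)
    (hO : O ∈ Set.extremePoints ℝ (TP 2 n u v))
    (hF : F ∈ Set.extremePoints ℝ (TP 2 n u v)) :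
    (suppF 2 n O \ suppF 2 n F).card ≤ n - 1 ∨
      ((suppF 2 n O \ suppF 2 n F).card = n ∧ (suppF 2 n F).card = n) :=
  stmt_6_general n u v hv O F hF
end

section
/- Let n ≥ 2 and consider the 2×n transportation polytope P(u,v) with margins u_1 = u_2 = 2n − 1, v_1 = 2n, and v_j = 2 for j = 2, …, n. Let O ∈ P(u,v) be the matrix with O_{11} = 2n − 1, O_{21} = 1, O_{2j} = 2 for j = 2, …, n and all other entries 0, and let F ∈ P(u,v) be the matrix with F_{21} = 2n − 1, F_{11} = 1, F_{1j} = 2 for j = 2, …, n and all other entries 0. Then O and F are vertices of P(u,v) and every feasible circuit walk from O to F has length at least n − 1. -/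
/-!
A circuit of the 2×n transportation problem is supported on exactly two columns, where its
first row takes opposite values. So along a circuit step, the change of the entry `y₁₁` is
matched, up to sign, by the change of an entry in some other column `j`, and the latter is at
most `v_j = 2` since both values lie in `[0, v_j]`. The entry `y₁₁` goes from `2n - 1` at `O`
to `1` at `F`, which needs at least `n - 1` steps. `O` and `F` are vertices because a point of
a 2×n transportation polytope with a row supported on a single column is the only point of
the polytope with its support.
-/

open Finset

section TransportationPolytope

variable {m n : ℕ} {u : Fin m → ℝ} {v : Fin n → ℝ} {x y : Matrix (Fin m) (Fin n) ℝ}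

lemma apply_le_of_mem_TP (hx : x ∈ TP m n u v) (i : Fin m) (j : Fin n) : x i j ≤ v j := by
  rw [← hx.2.2 j]
  exact single_le_sum (fun i _ => hx.1 i j) (mem_univ i)

lemma abs_sub_apply_le_of_mem_TP (hx : x ∈ TP m n u v) (hy : y ∈ TP m n u v) (i : Fin m)
    (j : Fin n) : |y i j - x i j| ≤ v j :=
  abs_sub_le_of_nonneg_of_le (hy.1 i j) (apply_le_of_mem_TP hy i j) (hx.1 i j)
    (apply_le_of_mem_TP hx i j)

lemma apply_eq_of_mem_TP_of_forall_ne_eq_zero (hx : x ∈ TP m n u v) {i : Fin m} {j₀ : Fin n}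
    (h : ∀ j ≠ j₀, x i j = 0) : x i j₀ = u i := by
  rw [← hx.2.1 i, sum_eq_single j₀ (fun j _ hj => h j hj) (by simp)]

lemma eq_of_mem_TP_of_forall_ne_row_eq (hx : x ∈ TP m n u v) (hy : y ∈ TP m n u v)
    (i₀ : Fin m) (h : ∀ i ≠ i₀, x i = y i) : x = y := by
  ext i j
  obtain rfl | hi := eq_or_ne i i₀
  · have hcol : ∑ i, x i j = ∑ i, y i j := by rw [hx.2.2 j, hy.2.2 j]
    rwa [← add_sum_erase _ _ (mem_univ i), ← add_sum_erase _ _ (mem_univ i),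
      sum_congr rfl fun k hk => congrFun (h k (ne_of_mem_erase hk)) j, add_left_inj] at hcol
  · exact congrFun (h i hi) j

lemma mem_extremePoints_TP_of_forall_support_subset_eq (hx : x ∈ TP m n u v)
    (h : ∀ y ∈ TP m n u v, (∀ i j, x i j = 0 → y i j = 0) → y = x) :
    x ∈ Set.extremePoints ℝ (TP m n u v) := by
  refine mem_extremePoints.2 ⟨hx, fun y₁ hy₁ y₂ hy₂ ⟨a, b, ha, hb, _, hab⟩ => ?_⟩
  have hzero : ∀ i j, x i j = 0 → y₁ i j = 0 ∧ y₂ i j = 0 := by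
    intro i j hij
    have hsum : a * y₁ i j + b * y₂ i j = 0 := by
      simpa [hij] using congrFun (congrFun hab i) j
    have := hy₁.1 i j; have := hy₂.1 i j
    constructor <;> nlinarith
  exact ⟨h y₁ hy₁ fun i j hij => (hzero i j hij).1,
    h y₂ hy₂ fun i j hij => (hzero i j hij).2⟩

end TransportationPolytope

lemma Fin.eq_of_ne_rev {i i₀ : Fin 2} (h : i ≠ i₀.rev) : i = i₀ := by
  fin_cases i <;> fin_cases i₀ <;> simp_all

lemma mem_extremePoints_TP_two_of_forall_ne_eq_zero {n : ℕ} {u : Fin 2 → ℝ}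
    {v : Fin n → ℝ} {x : Matrix (Fin 2) (Fin n) ℝ} (hx : x ∈ TP 2 n u v) {i₀ : Fin 2}
    {j₀ : Fin n} (h : ∀ j ≠ j₀, x i₀ j = 0) : x ∈ Set.extremePoints ℝ (TP 2 n u v) := by
  refine mem_extremePoints_TP_of_forall_support_subset_eq hx fun y hy hsupp => ?_
  have hy0 : ∀ j ≠ j₀, y i₀ j = 0 := fun j hj => hsupp i₀ j (h j hj)
  refine eq_of_mem_TP_of_forall_ne_row_eq hy hx i₀.rev fun i hi => ?_
  obtain rfl := Fin.eq_of_ne_rev hi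
  ext j
  obtain rfl | hj := eq_or_ne j j₀
  · rw [apply_eq_of_mem_TP_of_forall_ne_eq_zero hy hy0,
      apply_eq_of_mem_TP_of_forall_ne_eq_zero hx h]
  · rw [hy0 j hj, h j hj]

section Circuit

variable {n : ℕ} {g : Matrix (Fin 2) (Fin n) ℝ}

lemma IsCircuit.apply_one (hg : IsCircuit 2 n g) (j : Fin n) : g 1 j = -g 0 j := by
  have := hg.2.2.1 j
  rw [Fin.sum_univ_two] at this
  linarith

lemma IsCircuit.exists_support_pair (hg : IsCircuit 2 n g) :
    ∃ p q, p ≠ q ∧ ∀ j, j ≠ p → j ≠ q → g 0 j = 0 := by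
  have hneg := hg.apply_one
  obtain ⟨hne, hrow, -, hmin⟩ := hg
  obtain ⟨p, hp⟩ : ∃ p, g 0 p ≠ 0 := by
    by_contra! h
    exact hne (Matrix.ext fun i j => by fin_cases i <;> simp [h, hneg])
  obtain ⟨q, hqp, hq⟩ : ∃ q ≠ p, g 0 q ≠ 0 := by
    by_contra! h
    exact hp (by rw [← hrow 0, sum_eq_single p (fun j _ hj => h j hj) (by simp)])
  -- minimality of `g` forces its support to be that of the circuit on the columns `p`, `q`
  let e : Matrix (Fin 2) (Fin n) ℝ := Matrix.vecMulVec ![1, -1] (Pi.single p 1 - Pi.single q 1)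
  have he : ∀ i j, e i j ≠ 0 ↔ j = p ∨ j = q := by
    intro i j
    by_cases hjp : j = p <;> by_cases hjq : j = q <;> fin_cases i <;>
      simp_all [e, Ne.symm hqp]
  have hsupp := hmin e (fun h => (he 0 p).2 (Or.inl rfl) (by rw [h]; rfl))
    (fun i => by
      simp only [e, Matrix.vecMulVec_apply, Pi.sub_apply, ← mul_sum, sum_sub_distrib,
        sum_pi_single', mem_univ, if_true, sub_self, mul_zero])
    (fun j => by simp [e, Fin.sum_univ_two])
    (fun ⟨i, j⟩ hij => by
      rcases (he i j).1 hij with rfl | rfl <;> fin_cases i <;> simp_all)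
  refine ⟨p, q, hqp.symm, fun j hjp hjq => by_contra fun hj => ?_⟩
  have : ((0 : Fin 2), j) ∈ {x : Fin 2 × Fin n | e x.1 x.2 ≠ 0} := hsupp ▸ hj
  exact ((he 0 j).1 this).elim hjp hjq

lemma IsCircuit.exists_ne_abs_le (hg : IsCircuit 2 n g) (j₀ : Fin n) :
    ∃ j ≠ j₀, |g 0 j₀| ≤ |g 0 j| := by
  obtain ⟨p, q, hpq, hzero⟩ := hg.exists_support_pair
  have hpq_sum : g 0 p + g 0 q = 0 := by
    rw [← hg.2.1 0, ← sum_pair hpq]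
    exact sum_subset (subset_univ _) fun j _ hj => by simp_all
  by_cases hp : j₀ = p
  · exact ⟨q, hp ▸ hpq.symm, by rw [hp, eq_neg_of_add_eq_zero_left hpq_sum, abs_neg]⟩
  by_cases hq : j₀ = q
  · exact ⟨p, hq ▸ hpq, by rw [hq, eq_neg_of_add_eq_zero_right hpq_sum, abs_neg]⟩
  · exact ⟨p, Ne.symm hp, by rw [hzero j₀ hp hq, abs_zero]; exact abs_nonneg _⟩

end Circuit

lemma abs_sub_le_of_isCircuit_step {n : ℕ} {u : Fin 2 → ℝ} {v : Fin n → ℝ}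
    {x y g : Matrix (Fin 2) (Fin n) ℝ} (hx : x ∈ TP 2 n u v) (hy : y ∈ TP 2 n u v)
    (hg : IsCircuit 2 n g) {α : ℝ} (hxy : y = x + α • g) {j₀ : Fin n} {c : ℝ}
    (hc : ∀ j ≠ j₀, v j ≤ c) : |y 0 j₀ - x 0 j₀| ≤ c := by
  have hstep : ∀ j, y 0 j - x 0 j = α * g 0 j := fun j => by simp [hxy]
  obtain ⟨j, hj, hle⟩ := hg.exists_ne_abs_le j₀
  calc |y 0 j₀ - x 0 j₀| = |α| * |g 0 j₀| := by rw [hstep, abs_mul]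
    _ ≤ |α| * |g 0 j| := mul_le_mul_of_nonneg_left hle (abs_nonneg α)
    _ = |y 0 j - x 0 j| := by rw [hstep, abs_mul]
    _ ≤ v j := abs_sub_apply_le_of_mem_TP hx hy 0 j
    _ ≤ c := hc j hj

section CornerPoint

variable {n : ℕ} [NeZero n]

/-- The matrix `O` of the statement is `cornerPoint n 0`, and `F` is `cornerPoint n 1`. -/
def cornerPoint (n : ℕ) (i₀ : Fin 2) : Matrix (Fin 2) (Fin n) ℝ :=
  Matrix.of fun i j => if i = i₀ then (if (j : ℕ) = 0 then (2 * n - 1 : ℝ) else 0)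
    else (if (j : ℕ) = 0 then 1 else 2)

lemma sum_ite_val_eq_zero (a b : ℝ) :
    ∑ j : Fin n, (if (j : ℕ) = 0 then a else b) = a + (n - 1) * b := by
  obtain ⟨m, rfl⟩ : ∃ m, n = m + 1 := Nat.exists_eq_succ_of_ne_zero (NeZero.ne n)
  simp [Fin.sum_univ_succ]

variable {u : Fin 2 → ℝ} {v : Fin n → ℝ} (hu : ∀ i, u i = 2 * n - 1)
  (hv : ∀ j, v j = if (j : ℕ) = 0 then 2 * n else 2)
include hu hv

lemma cornerPoint_mem_TP (i₀ : Fin 2) : cornerPoint n i₀ ∈ TP 2 n u v := by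
  refine ⟨fun i j => ?_, fun i => ?_, fun j => ?_⟩
  · have : (1 : ℝ) ≤ n := by exact_mod_cast NeZero.one_le
    simp only [cornerPoint, Matrix.of_apply]
    split_ifs <;> linarith
  · simp only [cornerPoint, Matrix.of_apply]
    split_ifs <;> rw [sum_ite_val_eq_zero, hu] <;> ring
  · fin_cases i₀ <;> simp [cornerPoint, Fin.sum_univ_two, hv] <;> split_ifs <;> ring

lemma cornerPoint_mem_extremePoints (i₀ : Fin 2) :
    cornerPoint n i₀ ∈ Set.extremePoints ℝ (TP 2 n u v) :=
  mem_extremePoints_TP_two_of_forall_ne_eq_zero (cornerPoint_mem_TP hu hv i₀) (i₀ := i₀)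
    (j₀ := 0) fun j hj => by simp [cornerPoint, hj]

end CornerPoint

/-- for the 2×n transportation polytope with margins
u₁ = u₂ = 2n − 1, v₁ = 2n, vⱼ = 2 (j ≥ 2), the two specific assignments O and F are
vertices and every feasible circuit walk from O to F has length at least n − 1. -/
theorem stmt_8 (n : ℕ) (hn : 2 ≤ n)
    (u : Fin 2 → ℝ) (v : Fin n → ℝ) (O F : Matrix (Fin 2) (Fin n) ℝ)
    (hu : ∀ i, u i = 2 * n - 1)
    (hv : ∀ j, v j = if (j : ℕ) = 0 then 2 * n else 2)
    (hO : ∀ i j, O i j = if (i : ℕ) = 0 then (if (j : ℕ) = 0 then 2 * n - 1 else 0)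
        else (if (j : ℕ) = 0 then 1 else 2))
    (hF : ∀ i j, F i j = if (i : ℕ) = 1 then (if (j : ℕ) = 0 then 2 * n - 1 else 0)
        else (if (j : ℕ) = 0 then 1 else 2)) :
    O ∈ Set.extremePoints ℝ (TP 2 n u v) ∧
    F ∈ Set.extremePoints ℝ (TP 2 n u v) ∧
    ∀ (k : ℕ) (y : ℕ → Matrix (Fin 2) (Fin n) ℝ),
      y 0 = O → y k = F →
      (∀ i ≤ k, y i ∈ TP 2 n u v) →
      (∀ i < k, ∃ g : Matrix (Fin 2) (Fin n) ℝ, ∃ α : ℝ,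
        IsCircuit 2 n g ∧ 0 < α ∧ y (i + 1) = y i + α • g) →
      n - 1 ≤ k := by
  have : NeZero n := ⟨by omega⟩
  -- the entries in `hO` and `hF` are casts of natural numbers
  have hcast : ((2 * n - 1 : ℕ) : ℝ) = 2 * n - 1 := by
    push_cast [show 1 ≤ 2 * n by omega]; ring
  obtain rfl : O = cornerPoint n 0 := by
    ext i j; fin_cases i <;> simp [hO, cornerPoint, hcast, apply_ite (Nat.cast : ℕ → ℝ)]
  obtain rfl : F = cornerPoint n 1 := by
    ext i j; fin_cases i <;> simp [hF, cornerPoint, hcast, apply_ite (Nat.cast : ℕ → ℝ)]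
  refine ⟨cornerPoint_mem_extremePoints hu hv 0, cornerPoint_mem_extremePoints hu hv 1, ?_⟩
  intro k y h0 hk hfeas hstep
  have hdist : ∀ {i}, i < k → dist (y i 0 0) (y (i + 1) 0 0) ≤ 2 := fun {i} hi => by
    obtain ⟨g, α, hg, -, hy⟩ := hstep i hi
    rw [dist_comm, Real.dist_eq]
    exact abs_sub_le_of_isCircuit_step (hfeas i hi.le) (hfeas (i + 1) hi) hg hy
      fun j hj => by simp [hv, hj]
  have htotal := dist_le_range_sum_of_dist_le (f := fun i => y i 0 0) k hdist
  simp only [h0, hk, cornerPoint, Matrix.of_apply, Fin.isValue, Fin.val_eq_zero_iff,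
    ↓reduceIte, zero_ne_one, Real.dist_eq, sum_const, card_range, nsmul_eq_mul] at htotal
  have : (n : ℝ) ≤ k + 1 := by linarith [(abs_le.1 htotal).2]
  have : n ≤ k + 1 := by exact_mod_cast this
  omega
end

section
/- Let n ≥ 3 and consider the 2×n transportation polytope P(u,v) with margins u_1 = u_2 = 2n − 3, v_1 = 2n − 4, and v_j = 2 for j = 2, …, n. Let O ∈ P(u,v) be the matrix with O_{11} = 2n − 4, O_{12} = 1, O_{22} = 1, O_{2j} = 2 for j = 3, …, n and all other entries 0, and let F ∈ P(u,v) be the matrix with F_{21} = 2n − 4, F_{22} = 1, F_{12} = 1, F_{1j} = 2 for j = 3, …, n and all other entries 0. Then O and F are vertices of P(u,v) and every edge walk from O to F in P(u,v) has length at least n; in particular this polytope has graph diameter at least n. -/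
/-- Two distinct vertices are adjacent if the segment between them is extreme in P. -/
def AdjVert (m n : ℕ) (u : Fin m → ℝ) (v : Fin n → ℝ)
    (y z : Matrix (Fin m) (Fin n) ℝ) : Prop :=
  y ≠ z ∧ y ∈ Set.extremePoints ℝ (TP m n u v) ∧ z ∈ Set.extremePoints ℝ (TP m n u v) ∧
    IsExtreme ℝ (TP m n u v) (segment ℝ y z)

/-!
Call a column of a point of a 2 × n transportation polytope *positive* if both of its entries
are. A point is a vertex iff at most one of its columns is positive, and two adjacent vertices
share a zero entry in every column but two: otherwise the midpoint of the edge would have two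
positive columns one of which is not involved in the edge, and the cycle move on these two
columns would leave the edge.

Let `b` be the column with margin `2n - 4` and `p` the column in which `O` and `F` have their
entries `1`. The potential
  `1 - y₀ₚ` if `y₀b = 2n - 4`,  `n + 1 - y₀ₚ` if `y₀b = 0`,  `(2n - 1 - y₀b - y₀ₚ) / 2` otherwise
is `0` at `O` and `n` at `F`. The vertex structure and the row sums `2n - 3` pin down the
vertices next to those with `y₀b ∈ {0, 2n - 4}` well enough to check that the potential grows
by at most one along every edge, so every walk from `O` to `F` has at least `n` steps.
-/

open Finset

theorem convex_TP {m n : ℕ} {u : Fin m → ℝ} {v : Fin n → ℝ} : Convex ℝ (TP m n u v) := by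
  rintro y ⟨hy, hyr, hyc⟩ z ⟨hz, hzr, hzc⟩ a b ha hb hab
  refine ⟨fun i j => ?_, fun i => ?_, fun j => ?_⟩
  · simp only [Matrix.add_apply, Matrix.smul_apply, smul_eq_mul]
    exact add_nonneg (mul_nonneg ha (hy i j)) (mul_nonneg hb (hz i j))
  · simp only [Matrix.add_apply, Matrix.smul_apply, smul_eq_mul, sum_add_distrib, ← mul_sum,
      hyr, hzr]
    rw [← add_mul, hab, one_mul]
  · simp only [Matrix.add_apply, Matrix.smul_apply, smul_eq_mul, sum_add_distrib, ← mul_sum,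
      hyc, hzc]
    rw [← add_mul, hab, one_mul]

theorem eq_of_mem_segment_of_map_eq {E F : Type*} [AddCommGroup E] [Module ℝ E]
    [AddCommGroup F] [Module ℝ F] (f : E →ₗ[ℝ] F) {x y p q : E} (hxy : f x ≠ f y)
    (hp : p ∈ segment ℝ x y) (hq : q ∈ segment ℝ x y) (h : f p = f q) : p = q := by
  obtain ⟨a, b, -, -, hab, rfl⟩ := hp
  obtain ⟨a', b', -, -, hab', rfl⟩ := hq
  obtain rfl : b = 1 - a := by linarith
  obtain rfl : b' = 1 - a' := by linarith
  have : (a - a') • (f x - f y) = 0 := by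
    simp only [map_add, map_smul] at h
    rw [sub_smul, smul_sub, smul_sub]
    linear_combination (norm := module) h
  obtain rfl : a = a' :=
    sub_eq_zero.mp ((smul_eq_zero.mp this).resolve_right (sub_ne_zero.mpr hxy))
  rfl

namespace TP

variable {n : ℕ} {u : Fin 2 → ℝ} {v : Fin n → ℝ} {x y z : Matrix (Fin 2) (Fin n) ℝ}

theorem col_add (hy : y ∈ TP 2 n u v) (l : Fin n) : y 0 l + y 1 l = v l := by
  simpa [Fin.sum_univ_two] using hy.2.2 l

theorem apply_le (hy : y ∈ TP 2 n u v) (i : Fin 2) (l : Fin n) : y i l ≤ v l := by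
  have := col_add hy l
  fin_cases i <;> simp only [Fin.zero_eta, Fin.mk_one] <;> linarith [hy.1 0 l, hy.1 1 l]

theorem apply_add_apply_le (hy : y ∈ TP 2 n u v) (i : Fin 2) {j k : Fin n} (hjk : j ≠ k) :
    y i j + y i k ≤ u i := by
  rw [← hy.2.1 i, ← sum_pair hjk]
  exact sum_le_sum_of_subset_of_nonneg (subset_univ _) fun l _ _ => hy.1 i l

theorem forall_pos_of_pos_of_lt (hy : y ∈ TP 2 n u v) {i : Fin 2} {l : Fin n} (h₀ : 0 < y i l)
    (h₁ : y i l < v l) (i' : Fin 2) : 0 < y i' l := by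
  have := col_add hy l
  fin_cases i <;> fin_cases i' <;> simp only [Fin.zero_eta, Fin.mk_one] at h₀ h₁ ⊢ <;> linarith

theorem apply_eq_of_apply_eq (hy : y ∈ TP 2 n u v) (hz : z ∈ TP 2 n u v) {i : Fin 2}
    {l : Fin n} (h : y i l = z i l) (i' : Fin 2) : y i' l = z i' l := by
  have hyl := col_add hy l
  have hzl := col_add hz l
  fin_cases i <;> fin_cases i' <;> simp only [Fin.zero_eta, Fin.mk_one] at h ⊢ <;> linarith

theorem apply_eq_zero_or_eq (hy : y ∈ TP 2 n u v) {i' : Fin 2} {l : Fin n} (h : y i' l = 0)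
    (i : Fin 2) : y i l = 0 ∨ y i l = v l := by
  have hyl := col_add hy l
  fin_cases i' <;> fin_cases i <;> simp only [Fin.zero_eta, Fin.mk_one] at h ⊢ <;>
    first | exact .inl h | exact .inr (by linarith)

theorem add_eq_add (hy : y ∈ TP 2 n u v) (hz : z ∈ TP 2 n u v) (i : Fin 2) {j k : Fin n}
    (hjk : j ≠ k) (h : ∀ l, l ≠ j → l ≠ k → y i l = z i l) :
    y i j + y i k = z i j + z i k := by
  have hsum : ∑ l, (y i l - z i l) = (y i j - z i j) + (y i k - z i k) :=
    Fintype.sum_eq_add j k hjk fun l hl => sub_eq_zero.mpr (h l hl.1 hl.2)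
  rw [sum_sub_distrib, hy.2.1, hz.2.1, sub_self] at hsum
  linarith

theorem eq_of_forall_ne (hy : y ∈ TP 2 n u v) (hz : z ∈ TP 2 n u v) (l : Fin n)
    (h : ∀ l' ≠ l, y 0 l' = z 0 l') : y = z := by
  have hsum : ∑ l', (y 0 l' - z 0 l') = y 0 l - z 0 l :=
    Fintype.sum_eq_single l fun l' hl' => sub_eq_zero.mpr (h l' hl')
  rw [sum_sub_distrib, hy.2.1, hz.2.1, sub_self] at hsum
  ext i l'
  refine apply_eq_of_apply_eq hy hz (i := 0) ?_ i
  rcases eq_or_ne l' l with rfl | hl'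
  · linarith
  · exact h l' hl'

def cycleMatrix (j k : Fin n) : Matrix (Fin 2) (Fin n) ℝ :=
  Matrix.vecMulVec ![1, -1] (Pi.single j 1 - Pi.single k 1)

theorem cycleMatrix_apply (j k : Fin n) (i : Fin 2) (l : Fin n) :
    cycleMatrix j k i l =
      ![1, -1] i * ((Pi.single j 1 : Fin n → ℝ) l - (Pi.single k 1 : Fin n → ℝ) l) :=
  rfl

theorem cycleMatrix_apply_zero_left {j k : Fin n} (hjk : j ≠ k) : cycleMatrix j k 0 j = 1 := by
  simp [cycleMatrix_apply, hjk]

theorem cycleMatrix_apply_of_ne {j k l : Fin n} (hj : l ≠ j) (hk : l ≠ k) (i : Fin 2) :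
    cycleMatrix j k i l = 0 := by
  simp [cycleMatrix_apply, hj, hk]

theorem abs_cycleMatrix_apply_le (j k : Fin n) (i : Fin 2) (l : Fin n) :
    |cycleMatrix j k i l| ≤ 1 := by
  rw [cycleMatrix_apply, Pi.single_apply, Pi.single_apply]
  fin_cases i <;> split_ifs <;> norm_num

theorem sum_cycleMatrix_row (j k : Fin n) (i : Fin 2) : ∑ l, cycleMatrix j k i l = 0 := by
  simp [cycleMatrix_apply, ← mul_sum, sum_sub_distrib]

theorem sum_cycleMatrix_col (j k : Fin n) (l : Fin n) : ∑ i, cycleMatrix j k i l = 0 := by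
  simp [cycleMatrix_apply, Fin.sum_univ_two]

theorem add_smul_cycleMatrix_mem (hy : y ∈ TP 2 n u v) {j k : Fin n} {t : ℝ}
    (hj : ∀ i, |t| ≤ y i j) (hk : ∀ i, |t| ≤ y i k) : y + t • cycleMatrix j k ∈ TP 2 n u v := by
  obtain ⟨hnn, hrow, hcol⟩ := hy
  refine ⟨fun i l => ?_, fun i => ?_, fun l => ?_⟩
  · simp only [Matrix.add_apply, Matrix.smul_apply, smul_eq_mul]
    by_cases hl : l = j ∨ l = k
    · have hle : |t * cycleMatrix j k i l| ≤ |t| := by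
        rw [abs_mul]
        exact mul_le_of_le_one_right (abs_nonneg t) (abs_cycleMatrix_apply_le j k i l)
      have hyl : |t| ≤ y i l := by rcases hl with rfl | rfl <;> simp [hj, hk]
      linarith [neg_abs_le (t * cycleMatrix j k i l)]
    · push Not at hl
      rw [cycleMatrix_apply_of_ne hl.1 hl.2, mul_zero, add_zero]
      exact hnn i l
  · simp only [Matrix.add_apply, Matrix.smul_apply, smul_eq_mul]
    rw [sum_add_distrib, ← mul_sum, sum_cycleMatrix_row, mul_zero, add_zero, hrow]
  · simp only [Matrix.add_apply, Matrix.smul_apply, smul_eq_mul]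
    rw [sum_add_distrib, ← mul_sum, sum_cycleMatrix_col, mul_zero, add_zero, hcol]

theorem exists_pos_add_sub_mem (hy : y ∈ TP 2 n u v) {j k : Fin n}
    (hj : ∀ i, 0 < y i j) (hk : ∀ i, 0 < y i k) :
    ∃ ε : ℝ, 0 < ε ∧ y + ε • cycleMatrix j k ∈ TP 2 n u v ∧
      y - ε • cycleMatrix j k ∈ TP 2 n u v := by
  set ε := min (min (y 0 j) (y 1 j)) (min (y 0 k) (y 1 k))
  have hε : 0 < ε := lt_min (lt_min (hj 0) (hj 1)) (lt_min (hk 0) (hk 1))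
  have hεj : ∀ i, |ε| ≤ y i j := fun i => by
    rw [abs_of_pos hε]
    fin_cases i
    · exact (min_le_left _ _).trans (min_le_left _ _)
    · exact (min_le_left _ _).trans (min_le_right _ _)
  have hεk : ∀ i, |-ε| ≤ y i k := fun i => by
    rw [abs_neg, abs_of_pos hε]
    fin_cases i
    · exact (min_le_right _ _).trans (min_le_left _ _)
    · exact (min_le_right _ _).trans (min_le_right _ _)
  refine ⟨ε, hε, add_smul_cycleMatrix_mem hy hεj (by simpa using hεk), ?_⟩
  rw [sub_eq_add_neg, ← neg_smul]
  exact add_smul_cycleMatrix_mem hy (by simpa using hεj) hεk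

theorem mem_extremePoints_iff :
    y ∈ (TP 2 n u v).extremePoints ℝ ↔ y ∈ TP 2 n u v ∧ {l | ∀ i, 0 < y i l}.Subsingleton := by
  constructor
  · rintro ⟨hy, hext⟩
    refine ⟨hy, fun j hj k hk => ?_⟩
    by_contra hjk
    obtain ⟨ε, hε, h₁, h₂⟩ := exists_pos_add_sub_mem hy hj hk
    have := congrFun (congrFun (hext h₁ h₂ (mem_openSegment_add_sub y _)) 0) j
    simp [cycleMatrix_apply_zero_left hjk, hε.ne'] at this
  · rintro ⟨hy, hsub⟩
    refine ⟨hy, fun x hx x' hx' ⟨a, b, ha, hb, _, hxy⟩ => ?_⟩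
    have hcol : ∀ l, (¬ ∀ i, 0 < y i l) → ∀ i, x i l = y i l := by
      intro l hl
      push Not at hl
      obtain ⟨i, hi⟩ := hl
      have hentry : a * x i l + b * x' i l = y i l := by simp [← hxy]
      have hax : a * x i l = 0 := by
        linarith [mul_nonneg ha.le (hx.1 i l), mul_nonneg hb.le (hx'.1 i l)]
      have hxl := (mul_eq_zero.mp hax).resolve_left ha.ne'
      exact apply_eq_of_apply_eq hx hy (by linarith [hy.1 i l])
    by_cases hpos : ∃ l, ∀ i, 0 < y i l
    · obtain ⟨l, hl⟩ := hpos
      exact eq_of_forall_ne hx hy l fun l' hl' => hcol l' (fun h => hl' (hsub h hl)) 0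
    · push Not at hpos
      ext i l
      obtain ⟨i', hi'⟩ := hpos l
      exact hcol l (fun h => (h i').not_ge hi') i

theorem _root_.AdjVert.symm (h : AdjVert 2 n u v y z) : AdjVert 2 n u v z y :=
  ⟨h.1.symm, h.2.2.1, h.2.1, segment_symm ℝ y z ▸ h.2.2.2⟩

theorem _root_.AdjVert.exists_pair (h : AdjVert 2 n u v y z) :
    ∃ j k, j ≠ k ∧ ∀ l, l ≠ j → l ≠ k → ∃ i, y i l = 0 ∧ z i l = 0 := by
  obtain ⟨hyz, ⟨hy, -⟩, ⟨hz, -⟩, hface⟩ := h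
  obtain ⟨j, hj⟩ : ∃ j, y 0 j ≠ z 0 j := by
    by_contra! H
    exact hyz (Matrix.ext fun i l => apply_eq_of_apply_eq hy hz (H l) i)
  obtain ⟨k, hkj, hk⟩ : ∃ k, k ≠ j ∧ y 0 k ≠ z 0 k := by
    by_contra! H
    exact hyz (eq_of_forall_ne hy hz j H)
  refine ⟨j, k, hkj.symm, fun l hlj hlk => ?_⟩
  by_contra! H
  set m := midpoint ℝ y z
  have hm : ∀ i l, m i l = (y i l + z i l) / 2 := fun i l => by
    simp [m, midpoint_eq_smul_add]
    ring
  have hmj : ∀ i, 0 < m i j := fun i => by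
    have hne : y i j ≠ z i j := fun h => hj (apply_eq_of_apply_eq hy hz h 0)
    rw [hm]
    rcases hne.lt_or_gt with h | h <;> linarith [hy.1 i j, hz.1 i j]
  have hml : ∀ i, 0 < m i l := fun i => by
    rw [hm]
    rcases (hy.1 i l).lt_or_eq with h | h
    · linarith [hz.1 i l]
    · linarith [(hz.1 i l).lt_of_ne (H i h.symm).symm]
  have hmid := midpoint_mem_segment (𝕜 := ℝ) y z
  obtain ⟨ε, hε, h₁, h₂⟩ := exists_pos_add_sub_mem (convex_TP.segment_subset hy hz hmid) hml hmj
  have hseg := hface.left_mem_of_mem_openSegment h₁ h₂ hmid (mem_openSegment_add_sub m _)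
  -- the move does not change the `(0, k)` entry, which varies along the edge
  have hεC : m + ε • cycleMatrix l j = m :=
    eq_of_mem_segment_of_map_eq (Matrix.entryLinearMap ℝ ℝ 0 k) hk hseg hmid
      (by simp [cycleMatrix_apply_of_ne hlk.symm hkj])
  have := congrFun (congrFun hεC 0) l
  simp [cycleMatrix_apply_zero_left hlj, hε.ne'] at this

theorem _root_.AdjVert.exists_pivot (h : AdjVert 2 n u v y z) (b : Fin n)
    (hb : ∀ i, y i b = 0 → z i b ≠ 0) :
    ∃ c ≠ b, ∀ l, l ≠ b → l ≠ c → ∃ i, y i l = 0 ∧ z i l = 0 := by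
  obtain ⟨j, k, hjk, hout⟩ := h.exists_pair
  by_cases hbj : b = j
  · exact ⟨k, hbj ▸ hjk.symm, fun l hlb hlk => hout l (hbj ▸ hlb) hlk⟩
  by_cases hbk : b = k
  · exact ⟨j, hbk ▸ hjk, fun l hlb hlj => hout l hlj (hbk ▸ hlb)⟩
  obtain ⟨i, hyi, hzi⟩ := hout b hbj hbk
  exact (hb i hyi hzi).elim

end TP

section DiameterExample

open TP

variable {n : ℕ} {b p : Fin n} {y z : Matrix (Fin 2) (Fin n) ℝ}

def rowMargin (n : ℕ) : Fin 2 → ℝ := fun _ => 2 * n - 3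

def colMargin (b : Fin n) : Fin n → ℝ := fun l => if l = b then 2 * n - 4 else 2

@[simp] theorem rowMargin_apply (i : Fin 2) : rowMargin n i = 2 * n - 3 := rfl

@[simp] theorem colMargin_self : colMargin b b = 2 * n - 4 := if_pos rfl

theorem colMargin_of_ne {l : Fin n} (h : l ≠ b) : colMargin b l = 2 := if_neg h

theorem sum_colMargin : ∑ l, colMargin b l = 2 * (2 * n - 3) := by
  have : ∀ l, colMargin b l = 2 + if l = b then (2 * n - 6 : ℝ) else 0 := fun l => by
    unfold colMargin
    split_ifs <;> ring
  simp only [this, sum_add_distrib, sum_const, card_univ, Fintype.card_fin, nsmul_eq_mul,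
    sum_ite_eq', mem_univ, if_true]
  ring

noncomputable def potential (b p : Fin n) (y : Matrix (Fin 2) (Fin n) ℝ) : ℝ :=
  if y 0 b = 2 * n - 4 then 1 - y 0 p
  else if y 0 b = 0 then n + 1 - y 0 p
  else (2 * n - 1 - y 0 b - y 0 p) / 2

theorem potential_of_full (h : y 0 b = 2 * n - 4) : potential b p y = 1 - y 0 p := by
  simp [potential, h]

theorem potential_of_empty (hn : 3 ≤ n) (h : y 0 b = 0) : potential b p y = n + 1 - y 0 p := by
  have : (0 : ℝ) ≠ 2 * n - 4 := by
    have : (3 : ℝ) ≤ n := by exact_mod_cast hn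
    linarith
  simp [potential, h, this]

theorem potential_of_interior (h₀ : 0 < y 0 b) (h₁ : y 0 b < 2 * n - 4) :
    potential b p y = (2 * n - 1 - y 0 b - y 0 p) / 2 := by
  simp [potential, h₀.ne', h₁.ne]

theorem apply_eq_or_eq_or_mem_Ioo (hy : y ∈ TP 2 n (rowMargin n) (colMargin b)) :
    y 0 b = 2 * n - 4 ∨ y 0 b = 0 ∨ y 0 b ∈ Set.Ioo (0 : ℝ) (2 * n - 4) := by
  have hle := apply_le hy 0 b
  rw [colMargin_self] at hle
  rcases (hy.1 0 b).eq_or_lt with h₀ | h₀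
  · exact .inr (.inl h₀.symm)
  rcases hle.eq_or_lt with h₁ | h₁
  · exact .inl h₁
  · exact .inr (.inr ⟨h₀, h₁⟩)

theorem apply_le_one_of_full (hy : y ∈ TP 2 n (rowMargin n) (colMargin b)) {i : Fin 2}
    (hb : y i b = 2 * n - 4) {l : Fin n} (hl : l ≠ b) : y i l ≤ 1 := by
  have := apply_add_apply_le hy i hl.symm
  simp only [rowMargin_apply] at this
  linarith

theorem apply_eq_of_full_of_interior (hbp : b ≠ p)
    (h : AdjVert 2 n (rowMargin n) (colMargin b) y z) {i : Fin 2} (hyb : y i b = 2 * n - 4)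
    (hzb₀ : 0 < z i b) (hzb₁ : z i b < 2 * n - 4) :
    z i b = 2 * n - 5 ∧ (y i p = 1 ∧ z i p = 2 ∨ y i p = 0 ∧ z i p = 0) := by
  have hy := h.2.1.1
  obtain ⟨hz, hzsub⟩ := mem_extremePoints_iff.mp h.2.2.1
  obtain ⟨c, hcb, hout⟩ := h.exists_pivot b fun i' hy' hz' =>
    hzb₁.ne (hyb ▸ apply_eq_of_apply_eq hy hz (hy'.trans hz'.symm) i).symm
  have hzero : ∀ l, l ≠ b → l ≠ c → y i l = 0 ∧ z i l = 0 := by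
    intro l hlb hlc
    obtain ⟨i', hy', hz'⟩ := hout l hlb hlc
    have hyz := apply_eq_of_apply_eq hy hz (hy'.trans hz'.symm) i
    rcases apply_eq_zero_or_eq hy hy' i with hyl | hyl
    · exact ⟨hyl, hyz ▸ hyl⟩
    · rw [colMargin_of_ne hlb] at hyl
      linarith [apply_le_one_of_full hy hyb hlb]
  have hrow : ∀ x ∈ TP 2 n (rowMargin n) (colMargin b), (∀ l, l ≠ b → l ≠ c → x i l = 0) →
      x i b + x i c = 2 * n - 3 := fun x hx hx0 => by
    rw [← rowMargin_apply i, ← hx.2.1 i,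
      Fintype.sum_eq_add b c hcb.symm fun l hl => hx0 l hl.1 hl.2]
  have hyc : y i c = 1 := by linarith [hrow y hy fun l hb hc => (hzero l hb hc).1]
  have hzc := hrow z hz fun l hb hc => (hzero l hb hc).2
  have hzc_pos : ¬ ∀ i', 0 < z i' c := fun hc =>
    hcb (hzsub hc (forall_pos_of_pos_of_lt hz hzb₀ (by rwa [colMargin_self])))
  push Not at hzc_pos
  obtain ⟨i', hi'⟩ := hzc_pos
  have hzc2 : z i c = 2 := by
    rcases apply_eq_zero_or_eq hz (le_antisymm hi' (hz.1 i' c)) i with h0 | h2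
    · linarith
    · rwa [colMargin_of_ne hcb] at h2
  refine ⟨by linarith, ?_⟩
  by_cases hpc : p = c
  · exact .inl ⟨hpc ▸ hyc, hpc ▸ hzc2⟩
  · exact .inr (hzero p hbp.symm hpc)

theorem potential_eq_add_one_of_full (hbp : b ≠ p)
    (h : AdjVert 2 n (rowMargin n) (colMargin b) y z) (hyb : y 0 b = 2 * n - 4)
    (hzb₀ : 0 < z 0 b) (hzb₁ : z 0 b < 2 * n - 4) :
    potential b p z = potential b p y + 1 := by
  obtain ⟨hzb, hp⟩ := apply_eq_of_full_of_interior hbp h hyb hzb₀ hzb₁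
  rw [potential_of_full hyb, potential_of_interior hzb₀ hzb₁, hzb]
  rcases hp with ⟨hy, hz⟩ | ⟨hy, hz⟩ <;> rw [hy, hz] <;> ring

theorem potential_eq_add_one_of_empty (hn : 3 ≤ n) (hbp : b ≠ p)
    (h : AdjVert 2 n (rowMargin n) (colMargin b) y z) (hzb : z 0 b = 0)
    (hyb₀ : 0 < y 0 b) (hyb₁ : y 0 b < 2 * n - 4) :
    potential b p z = potential b p y + 1 := by
  have hy := h.2.1.1
  have hz := h.2.2.1.1
  have hyb := col_add hy b
  have hzb' := col_add hz b
  have hyp := col_add hy p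
  have hzp := col_add hz p
  simp only [colMargin_self, colMargin_of_ne hbp.symm] at hyb hzb' hyp hzp
  obtain ⟨hyb', hp⟩ := apply_eq_of_full_of_interior hbp h.symm (i := 1) (by linarith)
    (by linarith) (by linarith)
  rw [potential_of_empty hn hzb, potential_of_interior hyb₀ hyb₁]
  rcases hp with ⟨h₁, h₂⟩ | ⟨h₁, h₂⟩ <;> linarith

theorem not_adjVert_of_full_of_empty (hn : 3 ≤ n)
    (h : AdjVert 2 n (rowMargin n) (colMargin b) y z) (hyb : y 0 b = 2 * n - 4)
    (hzb : z 0 b = 0) : False := by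
  have hy := h.2.1.1
  have hz := h.2.2.1.1
  have hzb' : z 1 b = 2 * n - 4 := by linarith [col_add hz b, colMargin_self (b := b)]
  obtain ⟨c, hcb, hout⟩ := h.exists_pivot b fun i hy' hz' => by
    have := apply_eq_of_apply_eq hy hz (hy'.trans hz'.symm) 0
    have : (3 : ℝ) ≤ n := by exact_mod_cast hn
    linarith
  obtain ⟨l, hlb, hlc⟩ := ENat.exists_ne_ne_of_three_le (by simpa using hn) b c
  obtain ⟨i, hyl, hzl⟩ := hout l hlb hlc
  have hy1 := apply_le_one_of_full hy hyb hlb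
  have hz1 := apply_le_one_of_full hz hzb' hlb
  have hycol := col_add hy l
  have hzcol := col_add hz l
  rw [colMargin_of_ne hlb] at hycol hzcol
  fin_cases i <;> simp only [Fin.zero_eta, Fin.mk_one] at hyl hzl <;> linarith

theorem potential_le_add_one_of_interior (hbp : b ≠ p)
    (h : AdjVert 2 n (rowMargin n) (colMargin b) y z)
    (hyb₀ : 0 < y 0 b) (hyb₁ : y 0 b < 2 * n - 4) (hzb₀ : 0 < z 0 b)
    (hzb₁ : z 0 b < 2 * n - 4) :
    potential b p z ≤ potential b p y + 1 := by
  have hy := h.2.1.1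
  have hz := h.2.2.1.1
  have hpos := forall_pos_of_pos_of_lt hy hyb₀ (by rwa [colMargin_self])
  obtain ⟨c, hcb, hout⟩ := h.exists_pivot b fun i h₀ => ((hpos i).ne' h₀).elim
  have hagree : ∀ l, l ≠ b → l ≠ c → y 0 l = z 0 l := fun l hlb hlc => by
    obtain ⟨i, hyl, hzl⟩ := hout l hlb hlc
    exact apply_eq_of_apply_eq hy hz (hyl.trans hzl.symm) 0
  have hsum := add_eq_add hy hz 0 hcb.symm hagree
  rw [potential_of_interior hyb₀ hyb₁, potential_of_interior hzb₀ hzb₁]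
  by_cases hpc : p = c
  · subst hpc
    linarith
  · have hzc := apply_le hz 0 c
    rw [colMargin_of_ne hcb] at hzc
    rw [hagree p hbp.symm hpc]
    linarith [hy.1 0 c]

theorem potential_le_add_one (hn : 3 ≤ n) (hbp : b ≠ p)
    (h : AdjVert 2 n (rowMargin n) (colMargin b) y z) :
    potential b p z ≤ potential b p y + 1 := by
  have hy := h.2.1.1
  have hz := h.2.2.1.1
  have hn' : (3 : ℝ) ≤ n := by exact_mod_cast hn
  have hyp := apply_le hy 0 p
  rw [colMargin_of_ne hbp.symm] at hyp
  rcases apply_eq_or_eq_or_mem_Ioo hy with hyb | hyb | ⟨hyb₀, hyb₁⟩ <;>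
    rcases apply_eq_or_eq_or_mem_Ioo hz with hzb | hzb | ⟨hzb₀, hzb₁⟩
  · rw [potential_of_full hyb, potential_of_full hzb]
    linarith [apply_le_one_of_full hy hyb hbp.symm, hz.1 0 p]
  · exact (not_adjVert_of_full_of_empty hn h hyb hzb).elim
  · exact (potential_eq_add_one_of_full hbp h hyb hzb₀ hzb₁).le
  · rw [potential_of_empty hn hyb, potential_of_full hzb]
    linarith [hz.1 0 p]
  · have hzb' : z 1 b = 2 * n - 4 := by linarith [col_add hz b, colMargin_self (b := b)]
    have hzp := col_add hz p
    rw [colMargin_of_ne hbp.symm] at hzp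
    rw [potential_of_empty hn hyb, potential_of_empty hn hzb]
    linarith [apply_le_one_of_full hz hzb' hbp.symm]
  · rw [potential_of_empty hn hyb, potential_of_interior hzb₀ hzb₁]
    linarith [hz.1 0 p]
  · have := apply_add_apply_le hy 0 hbp
    rw [rowMargin_apply] at this
    rw [potential_of_interior hyb₀ hyb₁, potential_of_full hzb]
    linarith [hz.1 0 p]
  · exact (potential_eq_add_one_of_empty hn hbp h hzb hyb₀ hyb₁).le
  · exact potential_le_add_one_of_interior hbp h hyb₀ hyb₁ hzb₀ hzb₁

def endpointRow (b p : Fin n) : Fin n → ℝ :=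
  fun l => if l = b then 2 * n - 4 else if l = p then 1 else 0

/-- With `b` and `p` the first two columns, `endpoint b p 0` is `O` and `endpoint b p 1`
is `F`. -/
def endpoint (b p : Fin n) (r : Fin 2) : Matrix (Fin 2) (Fin n) ℝ :=
  Matrix.of fun i l => if i = r then endpointRow b p l else colMargin b l - endpointRow b p l

theorem endpoint_mem_extremePoints (hn : 3 ≤ n) (hbp : b ≠ p) (r : Fin 2) :
    endpoint b p r ∈ (TP 2 n (rowMargin n) (colMargin b)).extremePoints ℝ := by
  have hn' : (3 : ℝ) ≤ n := by exact_mod_cast hn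
  have hrow : ∑ l, endpointRow b p l = 2 * n - 3 := by
    rw [Fintype.sum_eq_add b p hbp fun l hl => by simp [endpointRow, hl.1, hl.2]]
    simp [endpointRow, hbp.symm]
    ring
  have hbound : ∀ l, 0 ≤ endpointRow b p l ∧ endpointRow b p l ≤ colMargin b l := fun l => by
    unfold endpointRow colMargin
    split_ifs <;> constructor <;> linarith
  refine mem_extremePoints_iff.mpr ⟨⟨fun i l => ?_, fun i => ?_, fun l => ?_⟩, ?_⟩
  · simp only [endpoint, Matrix.of_apply]
    split_ifs <;> linarith [hbound l]
  · by_cases hi : i = r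
    · simp [endpoint, hi, hrow]
    · simp [endpoint, hi, sum_sub_distrib, sum_colMargin, hrow]
      ring
  · fin_cases r <;> simp [endpoint, Fin.sum_univ_two]
  · have hzero : ∀ l ≠ p, ∃ i, endpoint b p r i l = 0 := fun l hlp => by
      by_cases hlb : l = b
      · refine ⟨r + 1, ?_⟩
        fin_cases r <;> simp [endpoint, endpointRow, hlb]
      · exact ⟨r, by simp [endpoint, endpointRow, hlb, hlp]⟩
    have hp : ∀ l, (∀ i, 0 < endpoint b p r i l) → l = p := fun l hl => by
      by_contra hlp
      obtain ⟨i, hi⟩ := hzero l hlp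
      exact (hl i).ne' hi
    intro j hj k hk
    rw [hp j hj, hp k hk]

theorem potential_endpoint_zero (hbp : b ≠ p) : potential b p (endpoint b p 0) = 0 := by
  rw [potential_of_full (by simp [endpoint, endpointRow])]
  simp [endpoint, endpointRow, hbp.symm]

theorem potential_endpoint_one (hn : 3 ≤ n) (hbp : b ≠ p) :
    potential b p (endpoint b p 1) = n := by
  rw [potential_of_empty hn (by simp [endpoint, endpointRow])]
  simp [endpoint, endpointRow, colMargin, hbp.symm]
  ring

end DiameterExample

theorem le_add_of_forall_le_add_one {f : ℕ → ℝ} {k : ℕ} (h : ∀ i < k, f (i + 1) ≤ f i + 1) :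
    f k ≤ f 0 + k := by
  induction k with
  | zero => simp
  | succ k ih =>
    have := ih fun i hi => h i (by omega)
    have := h k (by omega)
    push_cast
    linarith

/-- for the 2×n transportation polytope (n ≥ 3) with margins
u₁ = u₂ = 2n − 3, v₁ = 2n − 4, vⱼ = 2 (j ≥ 2), the two specific assignments O and F are
vertices and every edge walk from O to F has length at least n; in particular the
polytope has graph diameter at least n. -/
theorem stmt_9 (n : ℕ) (hn : 3 ≤ n)
    (u : Fin 2 → ℝ) (v : Fin n → ℝ) (O F : Matrix (Fin 2) (Fin n) ℝ)
    (hu : ∀ i, u i = 2 * n - 3)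
    (hv : ∀ j, v j = if (j : ℕ) = 0 then 2 * n - 4 else 2)
    (hO : ∀ i j, O i j =
      if (i : ℕ) = 0 then
        (if (j : ℕ) = 0 then 2 * n - 4 else if (j : ℕ) = 1 then 1 else 0)
      else
        (if (j : ℕ) = 0 then 0 else if (j : ℕ) = 1 then 1 else 2))
    (hF : ∀ i j, F i j =
      if (i : ℕ) = 1 then
        (if (j : ℕ) = 0 then 2 * n - 4 else if (j : ℕ) = 1 then 1 else 0)
      else
        (if (j : ℕ) = 0 then 0 else if (j : ℕ) = 1 then 1 else 2)) :
    O ∈ Set.extremePoints ℝ (TP 2 n u v) ∧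
    F ∈ Set.extremePoints ℝ (TP 2 n u v) ∧
    ∀ (k : ℕ) (w : ℕ → Matrix (Fin 2) (Fin n) ℝ),
      w 0 = O → w k = F →
      (∀ i < k, AdjVert 2 n u v (w i) (w (i + 1))) →
      n ≤ k := by
  let b : Fin n := ⟨0, by omega⟩
  let p : Fin n := ⟨1, by omega⟩
  have hbp : b ≠ p := by simp [b, p, Fin.ext_iff]
  -- the `if`s of `hv`, `hO`, `hF` are elaborated in `ℕ`
  have hn4 : ((2 * n - 4 : ℕ) : ℝ) = 2 * n - 4 := by
    push_cast [Nat.cast_sub (by omega : 4 ≤ 2 * n)]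
    ring
  have hb : ∀ j : Fin n, (j : ℕ) = 0 ↔ j = b := fun j => by simp [b, Fin.ext_iff]
  have hp : ∀ j : Fin n, (j : ℕ) = 1 ↔ j = p := fun j => by simp [p, Fin.ext_iff]
  simp only [hb, hp, Nat.cast_ite, hn4] at hv hO hF
  obtain rfl : u = rowMargin n := funext hu
  obtain rfl : v = colMargin b := funext fun j => by simp [hv, colMargin]
  obtain rfl : O = endpoint b p 0 := by
    ext i l
    fin_cases i <;> simp [hO, endpoint, endpointRow, colMargin]
    split_ifs <;> norm_num
  obtain rfl : F = endpoint b p 1 := by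
    ext i l
    fin_cases i <;> simp [hF, endpoint, endpointRow, colMargin]
    split_ifs <;> norm_num
  refine ⟨endpoint_mem_extremePoints hn hbp 0, endpoint_mem_extremePoints hn hbp 1,
    fun k w hw₀ hwk hadj => ?_⟩
  have := le_add_of_forall_le_add_one (f := fun i => potential b p (w i))
    fun i hi => potential_le_add_one hn hbp (hadj i hi)
  simp only [hw₀, hwk, potential_endpoint_zero hbp, potential_endpoint_one hn hbp,
    zero_add] at this
  exact_mod_cast this
end
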